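/- arXiv:2405.09677 — 5 statements merged into one kernel-verified Lean document; each statement's English description precedes it below -/
import Mathlib

section
/- Let u : ℝ^d → ℝ be Lipschitz with constant L. For δ > 0 define u_δ : ℝ^d → ℝ by u_δ = (average of u over δ(k+K)) on each set δ(k+K), k ∈ ℤ^d, and u_δ = u on ℝ^d \ δE. Set D₀ = inf{dist(K, k+K) : k ∈ ℤ^d, k ≠ 0}, which is strictly positive. Then there exists a constant C, depending only on d, the measure of Ω, L, the diameter of K and D₀, such that for all ε, δ > 0: F^φ_{δ,ε}(u_δ) ≤ C ∫_{{ξ ∈ ℝ^d : |ξ| ≥ D₀ δ/ε}} φ(ξ) |ξ|² dξ. -/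
open MeasureTheory Filter Metric Set Pointwise
open scoped Topology ENNReal NNReal

noncomputable section

/-- The lattice point of `ℤ^d` inside `ℝ^d`. -/
def lat (d : ℕ) (k : Fin d → ℤ) : EuclideanSpace ℝ (Fin d) := WithLp.toLp 2 (fun i => (k i : ℝ))

/-- The periodic set `E = ⋃_{k ∈ ℤ^d} (k + K)`. -/
def latSet (d : ℕ) (K : Set (EuclideanSpace ℝ (Fin d))) : Set (EuclideanSpace ℝ (Fin d)) :=
  ⋃ k : Fin d → ℤ, (lat d k +ᵥ K)

/-- `K` is compact, the closure of a bounded connected open set, with negligible boundary,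
whose integer translates are pairwise disjoint. -/
def IsAdmissibleK (d : ℕ) (K : Set (EuclideanSpace ℝ (Fin d))) : Prop :=
  (∃ U : Set (EuclideanSpace ℝ (Fin d)),
      IsOpen U ∧ IsConnected U ∧ Bornology.IsBounded U ∧ K = closure U) ∧
  MeasureTheory.volume (frontier K) = 0 ∧
  ∀ k : Fin d → ℤ, k ≠ 0 → Disjoint (lat d k +ᵥ K) K

/-- `φ` is a radial kernel with nonincreasing nonnegative profile `φ₀` and finite
second moment. -/
def IsKernel (d : ℕ) (φ : EuclideanSpace ℝ (Fin d) → ℝ) (φ₀ : ℝ → ℝ) : Prop :=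
  (∀ t, 0 ≤ φ₀ t) ∧ AntitoneOn φ₀ (Set.Ici 0) ∧ (∀ ξ, φ ξ = φ₀ ‖ξ‖) ∧
  MeasureTheory.Integrable (fun ξ : EuclideanSpace ℝ (Fin d) => φ ξ * (1 + ‖ξ‖ ^ 2))

/-- The nonlocal functional `F^φ_{δ,ε}`. -/
def Fphi (d : ℕ) (φ : EuclideanSpace ℝ (Fin d) → ℝ) (Ω K : Set (EuclideanSpace ℝ (Fin d)))
    (δ ε : ℝ) (u : EuclideanSpace ℝ (Fin d) → ℝ) : ℝ :=
  (ε ^ (d + 2))⁻¹ * ∫ x in Ω ∩ δ • latSet d K, ∫ y in Ω ∩ δ • latSet d K,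
    φ (ε⁻¹ • (x - y)) * (u x - u y) ^ 2

/-- The nonlocal functional `F_{δ,ε}` with the truncation kernel `χ_{B₁}`. -/
def Fball (d : ℕ) (Ω K : Set (EuclideanSpace ℝ (Fin d))) (δ ε : ℝ)
    (u : EuclideanSpace ℝ (Fin d) → ℝ) : ℝ :=
  (ε ^ (d + 2))⁻¹ *
    ∫ p in ((Ω ∩ δ • latSet d K) ×ˢ (Ω ∩ δ • latSet d K)) ∩
      {p : EuclideanSpace ℝ (Fin d) × EuclideanSpace ℝ (Fin d) | dist p.1 p.2 < ε},
      (u p.1 - u p.2) ^ 2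

/-- Distance between two sets. -/
def setDist {α : Type*} [PseudoMetricSpace α] (A B : Set α) : ℝ :=
  sInf {r : ℝ | ∃ x ∈ A, ∃ y ∈ B, r = dist x y}

/-- `D₀ = inf {dist(K, k+K) : k ∈ ℤ^d, k ≠ 0}`. -/
def D0 (d : ℕ) (K : Set (EuclideanSpace ℝ (Fin d))) : ℝ :=
  sInf {r : ℝ | ∃ k : Fin d → ℤ, k ≠ 0 ∧ r = setDist K (lat d k +ᵥ K)}

/-!
The cells `δ • (k + K)` are pairwise at distance at least `D₀ δ`, and `D₀ > 0` because the
compact set `K - K` is disjoint from the closed set of nonzero integer points. Since each cell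
average of `u` is within `L δ diam K` of `u`, the function `u_δ` is constant on each cell and,
for `x`, `y` in different cells, `|u_δ x - u_δ y| ≤ L (1 + 2 diam K / D₀) |x - y|` with
`|x - y| ≥ D₀ δ`. So the integrand of `F_{δ,ε}(u_δ)` is dominated by a multiple of
`φ ξ |ξ|²` restricted to `|ξ| ≥ D₀ δ / ε`, where `ξ = (x - y) / ε`; the change of variables
`y ↦ ξ` and `|x - y|² = ε² |ξ|²` absorb the factor `ε^(d+2)`, and integrating in `x` costs `|Ω|`.
-/

theorem setDist_le_dist {α : Type*} [PseudoMetricSpace α] {A B : Set α} {x y : α}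
    (hx : x ∈ A) (hy : y ∈ B) : setDist A B ≤ dist x y :=
  csInf_le ⟨0, by rintro r ⟨a, -, b, -, rfl⟩; exact dist_nonneg⟩ ⟨x, hx, y, hy, rfl⟩

theorem le_setDist {α : Type*} [PseudoMetricSpace α] {A B : Set α} {c : ℝ}
    (hA : A.Nonempty) (hB : B.Nonempty) (h : ∀ x ∈ A, ∀ y ∈ B, c ≤ dist x y) :
    c ≤ setDist A B := by
  obtain ⟨x, hx⟩ := hA
  obtain ⟨y, hy⟩ := hB
  exact le_csInf ⟨_, x, hx, y, hy, rfl⟩ (by rintro r ⟨a, ha, b, hb, rfl⟩; exact h a ha b hb)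

theorem setDist_nonneg {α : Type*} [PseudoMetricSpace α] (A B : Set α) : 0 ≤ setDist A B :=
  Real.sInf_nonneg (by rintro r ⟨a, -, b, -, rfl⟩; exact dist_nonneg)

theorem lat_sub (d : ℕ) (k k' : Fin d → ℤ) : lat d k - lat d k' = lat d (k - k') := by
  ext i
  simp [lat]

theorem one_le_norm_lat {d : ℕ} {k : Fin d → ℤ} (hk : k ≠ 0) : 1 ≤ ‖lat d k‖ := by
  obtain ⟨i, hi⟩ := Function.ne_iff.mp hk
  calc (1 : ℝ) ≤ |(k i : ℝ)| := by exact_mod_cast Int.one_le_abs hi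
    _ = ‖lat d k i‖ := by simp [lat]
    _ ≤ ‖lat d k‖ := PiLp.norm_apply_le _ _

theorem D0_le_setDist {d : ℕ} (K : Set (EuclideanSpace ℝ (Fin d))) {k : Fin d → ℤ}
    (hk : k ≠ 0) :
    D0 d K ≤ setDist K (lat d k +ᵥ K) :=
  csInf_le ⟨0, by rintro r ⟨k', -, rfl⟩; exact setDist_nonneg _ _⟩ ⟨k, hk, rfl⟩

/-- The nonzero points of `ℤ^d`; excluding `0` by `1 ≤ ‖v‖` makes the set visibly closed. -/
def nonzeroIntPoints (d : ℕ) : Set (EuclideanSpace ℝ (Fin d)) :=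
  (⋂ i, (fun v => v i) ⁻¹' range ((↑) : ℤ → ℝ)) ∩ {v | 1 ≤ ‖v‖}

theorem isClosed_nonzeroIntPoints (d : ℕ) : IsClosed (nonzeroIntPoints d) :=
  (isClosed_iInter fun i => Real.isClosed_range_intCast.preimage (by fun_prop)).inter
    (isClosed_le continuous_const continuous_norm)

theorem lat_mem_nonzeroIntPoints {d : ℕ} {k : Fin d → ℤ} (hk : k ≠ 0) :
    lat d k ∈ nonzeroIntPoints d :=
  ⟨mem_iInter.mpr fun i => ⟨k i, rfl⟩, one_le_norm_lat hk⟩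

theorem disjoint_sub_nonzeroIntPoints {d : ℕ} {K : Set (EuclideanSpace ℝ (Fin d))}
    (hdisj : ∀ k : Fin d → ℤ, k ≠ 0 → Disjoint (lat d k +ᵥ K) K) :
    Disjoint (K - K) (nonzeroIntPoints d) := by
  rw [Set.disjoint_left]
  rintro _ ⟨a, ha, b, hb, rfl⟩ ⟨hint, hnorm : 1 ≤ ‖a - b‖⟩
  choose k hk using mem_iInter.mp hint
  have hlat : lat d k = a - b := by ext i; exact hk i
  have hk0 : k ≠ 0 := by
    rintro rfl
    rw [show a - b = 0 by rw [← hlat]; ext; simp [lat]] at hnorm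
    norm_num at hnorm
  refine Set.disjoint_left.mp (hdisj k hk0) ⟨b, hb, ?_⟩ ha
  simp [hlat]

theorem D0_pos {d : ℕ} (hd : 1 ≤ d) {K : Set (EuclideanSpace ℝ (Fin d))} (hK : IsCompact K)
    (hKne : K.Nonempty) (hdisj : ∀ k : Fin d → ℤ, k ≠ 0 → Disjoint (lat d k +ᵥ K) K) :
    0 < D0 d K := by
  have : Nonempty (Fin d) := ⟨⟨0, hd⟩⟩
  have hKK : IsCompact (K - K) := by
    rw [← Set.sub_image_prod]
    exact (hK.prod hK).image continuous_sub
  obtain ⟨r, hr, hsep⟩ := Metric.exists_pos_forall_lt_edist hKK (isClosed_nonzeroIntPoints d)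
    (disjoint_sub_nonzeroIntPoints hdisj)
  obtain ⟨k₀, hk₀⟩ := exists_ne (0 : Fin d → ℤ)
  refine (NNReal.coe_pos.mpr hr).trans_le (le_csInf ⟨_, k₀, hk₀, rfl⟩ ?_)
  rintro _ ⟨k, hk, rfl⟩
  refine le_setDist hKne hKne.vadd_set ?_
  rintro a ha _ ⟨c, hc, rfl⟩
  have h := hsep (a - c) (sub_mem_sub ha hc) (lat d k) (lat_mem_nonzeroIntPoints hk)
  rw [edist_nndist, ENNReal.coe_lt_coe, ← NNReal.coe_lt_coe, coe_nndist] at h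
  calc (r : ℝ) ≤ dist (a - c) (lat d k) := h.le
    _ = dist a (lat d k +ᵥ c) := by
      rw [dist_eq_norm, dist_eq_norm, vadd_eq_add]
      congr 1
      abel

theorem mul_D0_le_dist_of_mem_cells {d : ℕ} {K : Set (EuclideanSpace ℝ (Fin d))} {δ : ℝ}
    (hδ : 0 < δ) {k k' : Fin d → ℤ} (hkk : k ≠ k') {x y : EuclideanSpace ℝ (Fin d)}
    (hx : x ∈ δ • (lat d k +ᵥ K)) (hy : y ∈ δ • (lat d k' +ᵥ K)) :
    D0 d K * δ ≤ dist x y := by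
  obtain ⟨_, ⟨p, hp, rfl⟩, rfl⟩ := hx
  obtain ⟨_, ⟨q, hq, rfl⟩, rfl⟩ := hy
  rw [dist_smul₀, Real.norm_of_nonneg hδ.le, mul_comm]
  refine mul_le_mul_of_nonneg_left ?_ hδ.le
  calc D0 d K ≤ setDist K (lat d (k' - k) +ᵥ K) := D0_le_setDist K (sub_ne_zero.mpr hkk.symm)
    _ ≤ dist p (lat d (k' - k) +ᵥ q) := setDist_le_dist hp (vadd_mem_vadd_set hq)
    _ = dist (lat d k +ᵥ p) (lat d k' +ᵥ q) := by
      simp only [← lat_sub, dist_eq_norm, vadd_eq_add]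
      congr 1
      abel

theorem LipschitzWith.dist_setAverage_le {X : Type*} [MetricSpace X] [MeasurableSpace X]
    [OpensMeasurableSpace X] {μ : Measure X} [IsFiniteMeasureOnCompacts μ] {u : X → ℝ}
    {L : ℝ≥0} (hu : LipschitzWith L u) {S : Set X} (hS : IsCompact S) (hS0 : μ S ≠ 0)
    {x : X} (hx : x ∈ S) : dist (⨍ y in S, u y ∂μ) (u x) ≤ L * diam S :=
  (convex_closedBall (u x) _).set_average_mem isClosed_closedBall hS0 hS.measure_lt_top.ne
    (ae_restrict_of_forall_mem hS.measurableSet fun y hy => (hu.dist_le_mul y x).trans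
      (mul_le_mul_of_nonneg_left (dist_le_diam_of_mem hS.isBounded hy hx) L.coe_nonneg))
    (hu.continuous.continuousOn.integrableOn_compact hS)

section Cells

variable {d : ℕ} {K : Set (EuclideanSpace ℝ (Fin d))} {δ : ℝ}

theorem isCompact_cell (hK : IsCompact K) (δ : ℝ) (k : Fin d → ℤ) :
    IsCompact (δ • (lat d k +ᵥ K)) :=
  (hK.vadd (lat d k)).smul δ

theorem volume_cell_ne_zero (hK : (interior K).Nonempty) (hδ : δ ≠ 0) (k : Fin d → ℤ) :
    volume (δ • (lat d k +ᵥ K)) ≠ 0 := fun h =>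
  ((isOpen_interior.vadd (lat d k)).smul₀ hδ).measure_ne_zero volume hK.vadd_set.smul_set
    (measure_mono_null (smul_set_mono (vadd_set_mono interior_subset)) h)

theorem diam_cell (hδ : 0 ≤ δ) (k : Fin d → ℤ) :
    diam (δ • (lat d k +ᵥ K)) = δ * diam K := by
  rw [diam_smul₀, diam_vadd, Real.norm_of_nonneg hδ]

variable {u v : EuclideanSpace ℝ (Fin d) → ℝ} {L : ℝ≥0}

theorem abs_sub_le_of_mem_cell (hu : LipschitzWith L u) (hK : IsCompact K)
    (hKint : (interior K).Nonempty) (hδ : 0 < δ)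
    (hv : ∀ k : Fin d → ℤ, ∀ x ∈ δ • (lat d k +ᵥ K),
      v x = ⨍ y in δ • (lat d k +ᵥ K), u y)
    {k : Fin d → ℤ} {x : EuclideanSpace ℝ (Fin d)} (hx : x ∈ δ • (lat d k +ᵥ K)) :
    |v x - u x| ≤ L * (δ * diam K) := by
  rw [hv k x hx, ← Real.dist_eq, ← diam_cell hδ.le k]
  exact hu.dist_setAverage_le (isCompact_cell hK δ k) (volume_cell_ne_zero hKint hδ.ne' k) hx

theorem eq_or_abs_sub_le_of_mem_cells (hu : LipschitzWith L u) (hK : IsCompact K)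
    (hKint : (interior K).Nonempty) (hD0 : 0 < D0 d K) (hδ : 0 < δ)
    (hv : ∀ k : Fin d → ℤ, ∀ x ∈ δ • (lat d k +ᵥ K),
      v x = ⨍ y in δ • (lat d k +ᵥ K), u y)
    {x y : EuclideanSpace ℝ (Fin d)} (hx : x ∈ δ • latSet d K)
    (hy : y ∈ δ • latSet d K) :
    v x = v y ∨ (D0 d K * δ ≤ ‖x - y‖ ∧
      |v x - v y| ≤ L * (1 + 2 * diam K / D0 d K) * ‖x - y‖) := by
  rw [latSet, smul_set_iUnion, mem_iUnion] at hx hy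
  obtain ⟨k, hxk⟩ := hx
  obtain ⟨k', hyk'⟩ := hy
  by_cases hkk : k = k'
  · subst hkk
    exact Or.inl (by rw [hv k x hxk, hv k y hyk'])
  have hsep : D0 d K * δ ≤ ‖x - y‖ :=
    dist_eq_norm x y ▸ mul_D0_le_dist_of_mem_cells hδ hkk hxk hyk'
  have hδsep : δ * diam K ≤ diam K / D0 d K * ‖x - y‖ := by
    rw [div_mul_eq_mul_div, le_div_iff₀ hD0]
    nlinarith [diam_nonneg (s := K)]
  refine Or.inr ⟨hsep, ?_⟩
  calc |v x - v y| ≤ |v x - u x| + (|u x - u y| + |v y - u y|) := by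
        have h₁ := abs_sub_le (v x) (u x) (v y)
        have h₂ := abs_sub_le (u x) (u y) (v y)
        rw [abs_sub_comm (u y)] at h₂
        linarith
    _ ≤ L * (δ * diam K) + (L * ‖x - y‖ + L * (δ * diam K)) := by
        gcongr
        · exact abs_sub_le_of_mem_cell hu hK hKint hδ hv hxk
        · rw [← Real.dist_eq, ← dist_eq_norm]
          exact hu.dist_le_mul x y
        · exact abs_sub_le_of_mem_cell hu hK hKint hδ hv hyk'
    _ = L * (2 * (δ * diam K) + ‖x - y‖) := by ring
    _ ≤ L * (2 * (diam K / D0 d K * ‖x - y‖) + ‖x - y‖) := by gcongr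
    _ = L * (1 + 2 * diam K / D0 d K) * ‖x - y‖ := by ring

end Cells

theorem IsKernel.nonneg {d : ℕ} {φ : EuclideanSpace ℝ (Fin d) → ℝ} {φ₀ : ℝ → ℝ}
    (hφ : IsKernel d φ φ₀) (ξ : EuclideanSpace ℝ (Fin d)) : 0 ≤ φ ξ :=
  hφ.2.2.1 ξ ▸ hφ.1 _

theorem IsKernel.integrable_mul_norm_sq {d : ℕ} {φ : EuclideanSpace ℝ (Fin d) → ℝ}
    {φ₀ : ℝ → ℝ} (hφ : IsKernel d φ φ₀) :
    Integrable (fun ξ : EuclideanSpace ℝ (Fin d) => φ ξ * ‖ξ‖ ^ 2) := by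
  have hbdd := hφ.2.2.2.bdd_mul (c := 1) (f := fun ξ => ‖ξ‖ ^ 2 / (1 + ‖ξ‖ ^ 2))
    (Continuous.aestronglyMeasurable <|
      Continuous.div (by fun_prop) (by fun_prop) fun ξ => by positivity)
    (ae_of_all _ fun ξ => by
      rw [Real.norm_of_nonneg (by positivity), div_le_one (by positivity)]
      linarith)
  refine hbdd.congr (ae_of_all _ fun ξ => ?_)
  have : (1 : ℝ) + ‖ξ‖ ^ 2 ≠ 0 := by positivity
  field_simp

theorem setIntegral_setIntegral_le_of_le_comp_sub {G : Type*} [AddGroup G] [MeasurableSpace G]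
    [MeasurableAdd₂ G] [MeasurableNeg G] {μ : Measure G} [SFinite μ] [μ.IsAddLeftInvariant]
    [μ.IsNegInvariant] {A : Set G} (hA : MeasurableSet A) (hAfin : μ A ≠ ∞)
    {F : G → G → ℝ} {H : G → ℝ} (hF : ∀ x ∈ A, ∀ y ∈ A, 0 ≤ F x y)
    (hFH : ∀ x ∈ A, ∀ y ∈ A, F x y ≤ H (x - y)) (hH : Integrable H μ) (hH0 : 0 ≤ H) :
    ∫ x in A, ∫ y in A, F x y ∂μ ∂μ ≤ μ.real A * ∫ z, H z ∂μ := by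
  have hinner : ∀ x ∈ A, ∫ y in A, F x y ∂μ ≤ ∫ z, H z ∂μ := fun x hx => calc
    ∫ y in A, F x y ∂μ ≤ ∫ y in A, H (x - y) ∂μ :=
        integral_mono_of_nonneg (ae_restrict_of_forall_mem hA (hF x hx))
          (hH.comp_sub_left x).integrableOn (ae_restrict_of_forall_mem hA (hFH x hx))
    _ ≤ ∫ y, H (x - y) ∂μ :=
        setIntegral_le_integral (hH.comp_sub_left x) (ae_of_all _ fun y => hH0 (x - y))
    _ = ∫ z, H z ∂μ := integral_sub_left_eq_self H μ x
  calc ∫ x in A, ∫ y in A, F x y ∂μ ∂μ ≤ ∫ _ in A, ∫ z, H z ∂μ ∂μ :=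
        integral_mono_of_nonneg
          (ae_restrict_of_forall_mem hA fun x hx => setIntegral_nonneg hA (hF x hx))
          (integrableOn_const hAfin) (ae_restrict_of_forall_mem hA hinner)
    _ = μ.real A * ∫ z, H z ∂μ := by rw [setIntegral_const, smul_eq_mul]

theorem kernel_mul_sq_le_indicator {E : Type*} [NormedAddCommGroup E] [NormedSpace ℝ E]
    {φ : E → ℝ} (hφ0 : ∀ ξ, 0 ≤ φ ξ) {r C ε a : ℝ} (hε : 0 < ε) {z : E}
    (h : a = 0 ∨ (r ≤ ‖z‖ ∧ |a| ≤ C * ‖z‖)) :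
    φ (ε⁻¹ • z) * a ^ 2 ≤
      C ^ 2 * ε ^ 2 * {ξ | r / ε ≤ ‖ξ‖}.indicator (fun ξ => φ ξ * ‖ξ‖ ^ 2) (ε⁻¹ • z) := by
  rcases h with rfl | ⟨hr, hC⟩
  · rw [zero_pow two_ne_zero, mul_zero]
    exact mul_nonneg (by positivity)
      (indicator_nonneg (fun ξ _ => mul_nonneg (hφ0 ξ) (sq_nonneg _)) _)
  have hmem : ε⁻¹ • z ∈ {ξ : E | r / ε ≤ ‖ξ‖} := by
    change r / ε ≤ ‖ε⁻¹ • z‖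
    rw [norm_smul, norm_inv, Real.norm_of_nonneg hε.le, inv_mul_eq_div]
    gcongr
  have hsq : a ^ 2 ≤ (C * ‖z‖) ^ 2 := by
    rw [← sq_abs]
    exact pow_le_pow_left₀ (abs_nonneg _) hC 2
  rw [indicator_of_mem hmem, norm_smul, norm_inv, Real.norm_of_nonneg hε.le]
  calc φ (ε⁻¹ • z) * a ^ 2 ≤ φ (ε⁻¹ • z) * (C * ‖z‖) ^ 2 :=
        mul_le_mul_of_nonneg_left hsq (hφ0 _)
    _ = C ^ 2 * ε ^ 2 * (φ (ε⁻¹ • z) * (ε⁻¹ * ‖z‖) ^ 2) := by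
        field_simp

theorem integral_integral_kernel_le {E : Type*} [NormedAddCommGroup E] [NormedSpace ℝ E]
    [FiniteDimensional ℝ E] [MeasurableSpace E] [BorelSpace E] {μ : Measure E}
    [μ.IsAddHaarMeasure] {φ : E → ℝ} (hφ0 : ∀ ξ, 0 ≤ φ ξ)
    (hφint : Integrable (fun ξ => φ ξ * ‖ξ‖ ^ 2) μ) {A : Set E} (hA : MeasurableSet A)
    (hAfin : μ A ≠ ∞) {f : E → ℝ} {r C ε : ℝ} (hε : 0 < ε)
    (hf : ∀ x ∈ A, ∀ y ∈ A, f x = f y ∨ (r ≤ ‖x - y‖ ∧ |f x - f y| ≤ C * ‖x - y‖)) :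
    (ε ^ (Module.finrank ℝ E + 2))⁻¹ *
        ∫ x in A, ∫ y in A, φ (ε⁻¹ • (x - y)) * (f x - f y) ^ 2 ∂μ ∂μ ≤
      μ.real A * C ^ 2 * ∫ ξ in {ξ | r / ε ≤ ‖ξ‖}, φ ξ * ‖ξ‖ ^ 2 ∂μ := by
  set S : Set E := {ξ | r / ε ≤ ‖ξ‖}
  set G : E → ℝ := S.indicator fun ξ => φ ξ * ‖ξ‖ ^ 2
  have hS : MeasurableSet S := measurableSet_le measurable_const measurable_norm
  have hG0 : 0 ≤ G := indicator_nonneg fun ξ _ => mul_nonneg (hφ0 ξ) (sq_nonneg _)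
  have hpt : ∀ x ∈ A, ∀ y ∈ A,
      φ (ε⁻¹ • (x - y)) * (f x - f y) ^ 2 ≤ C ^ 2 * ε ^ 2 * G (ε⁻¹ • (x - y)) :=
    fun x hx y hy =>
    kernel_mul_sq_le_indicator hφ0 hε ((hf x hx y hy).imp_left sub_eq_zero_of_eq)
  have hscale : ∫ z, C ^ 2 * ε ^ 2 * G (ε⁻¹ • z) ∂μ =
      ε ^ (Module.finrank ℝ E + 2) * (C ^ 2 * ∫ ξ in S, φ ξ * ‖ξ‖ ^ 2 ∂μ) := by
    rw [integral_const_mul, Measure.integral_comp_inv_smul_of_nonneg μ G hε.le,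
      integral_indicator hS, smul_eq_mul]
    ring
  calc (ε ^ (Module.finrank ℝ E + 2))⁻¹ *
        ∫ x in A, ∫ y in A, φ (ε⁻¹ • (x - y)) * (f x - f y) ^ 2 ∂μ ∂μ
      ≤ (ε ^ (Module.finrank ℝ E + 2))⁻¹ *
        (μ.real A * ∫ z, C ^ 2 * ε ^ 2 * G (ε⁻¹ • z) ∂μ) := by
        gcongr
        refine setIntegral_setIntegral_le_of_le_comp_sub hA hAfin
          (fun x _ y _ => mul_nonneg (hφ0 _) (sq_nonneg _)) hpt
          (((hφint.indicator hS).comp_smul (inv_ne_zero hε.ne')).const_mul _)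
          fun z => mul_nonneg (by positivity) (hG0 _)
    _ = μ.real A * C ^ 2 * ∫ ξ in S, φ ξ * ‖ξ‖ ^ 2 ∂μ := by
        rw [hscale]
        field_simp

theorem stmt_1_general (d : ℕ) (hd : 1 ≤ d)
    (K : Set (EuclideanSpace ℝ (Fin d))) (hK : IsAdmissibleK d K)
    (Ω : Set (EuclideanSpace ℝ (Fin d))) (hΩo : IsOpen Ω) (hΩb : Bornology.IsBounded Ω)
    (φ : EuclideanSpace ℝ (Fin d) → ℝ) (φ₀ : ℝ → ℝ) (hφ : IsKernel d φ φ₀)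
    (u : EuclideanSpace ℝ (Fin d) → ℝ) (L : NNReal) (hu : LipschitzWith L u)
    (uδ : ℝ → EuclideanSpace ℝ (Fin d) → ℝ)
    (huδ1 : ∀ δ > (0:ℝ), ∀ k : Fin d → ℤ, ∀ x ∈ δ • (lat d k +ᵥ K),
      uδ δ x = ⨍ y in δ • (lat d k +ᵥ K), u y) :
    0 < D0 d K ∧
    ∃ C > (0:ℝ), ∀ ε > (0:ℝ), ∀ δ > (0:ℝ),
      Fphi d φ Ω K δ ε (uδ δ) ≤
        C * ∫ ξ in {ξ : EuclideanSpace ℝ (Fin d) | D0 d K * δ / ε ≤ ‖ξ‖},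
          φ ξ * ‖ξ‖ ^ 2 := by
  obtain ⟨⟨U, hUo, hUconn, hUb, hKU⟩, -, hdisj⟩ := hK
  have hKc : IsCompact K := by rw [hKU]; exact hUb.isCompact_closure
  have hKint : (interior K).Nonempty :=
    hUconn.nonempty.mono (hKU ▸ interior_maximal subset_closure hUo)
  have hD0 : 0 < D0 d K := D0_pos hd hKc (hKint.mono interior_subset) hdisj
  set C₁ := (L : ℝ) * (1 + 2 * diam K / D0 d K)
  refine ⟨hD0, volume.real Ω * C₁ ^ 2 + 1, by positivity, fun ε hε δ hδ => ?_⟩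
  have hA : MeasurableSet (Ω ∩ δ • latSet d K) := hΩo.measurableSet.inter
    ((MeasurableSet.iUnion fun k => hKc.isClosed.measurableSet.const_vadd _).const_smul₀ δ)
  have hAfin : volume (Ω ∩ δ • latSet d K) ≠ ∞ :=
    measure_ne_top_of_subset inter_subset_left hΩb.measure_lt_top.ne
  have hJ : 0 ≤ ∫ ξ in {ξ : EuclideanSpace ℝ (Fin d) | D0 d K * δ / ε ≤ ‖ξ‖}, φ ξ * ‖ξ‖ ^ 2 :=
    integral_nonneg fun ξ => mul_nonneg (hφ.nonneg ξ) (sq_nonneg _)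
  calc Fphi d φ Ω K δ ε (uδ δ)
      ≤ volume.real (Ω ∩ δ • latSet d K) * C₁ ^ 2 *
          ∫ ξ in {ξ : EuclideanSpace ℝ (Fin d) | D0 d K * δ / ε ≤ ‖ξ‖}, φ ξ * ‖ξ‖ ^ 2 := by
        have := integral_integral_kernel_le hφ.nonneg hφ.integrable_mul_norm_sq hA hAfin hε
          fun x hx y hy =>
            eq_or_abs_sub_le_of_mem_cells hu hKc hKint hD0 hδ (huδ1 δ hδ) hx.2 hy.2
        rwa [finrank_euclideanSpace_fin] at this
    _ ≤ (volume.real Ω * C₁ ^ 2 + 1) *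
          ∫ ξ in {ξ : EuclideanSpace ℝ (Fin d) | D0 d K * δ / ε ≤ ‖ξ‖}, φ ξ * ‖ξ‖ ^ 2 := by
        have hmono : volume.real (Ω ∩ δ • latSet d K) ≤ volume.real Ω :=
          measureReal_mono inter_subset_left hΩb.measure_lt_top.ne
        gcongr ?_ * _
        nlinarith [sq_nonneg C₁]

/-- estimate of the energy of the piecewise-averaged interpolation of a
Lipschitz function. -/
theorem stmt_1 (d : ℕ) (hd : 1 ≤ d)
    (K : Set (EuclideanSpace ℝ (Fin d))) (hK : IsAdmissibleK d K)
    (Ω : Set (EuclideanSpace ℝ (Fin d))) (hΩo : IsOpen Ω) (hΩb : Bornology.IsBounded Ω)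
    (φ : EuclideanSpace ℝ (Fin d) → ℝ) (φ₀ : ℝ → ℝ) (hφ : IsKernel d φ φ₀)
    (u : EuclideanSpace ℝ (Fin d) → ℝ) (L : NNReal) (hu : LipschitzWith L u)
    (uδ : ℝ → EuclideanSpace ℝ (Fin d) → ℝ)
    (huδ1 : ∀ δ > (0:ℝ), ∀ k : Fin d → ℤ, ∀ x ∈ δ • (lat d k +ᵥ K),
      uδ δ x = ⨍ y in δ • (lat d k +ᵥ K), u y)
    (huδ2 : ∀ δ > (0:ℝ), ∀ x ∉ δ • latSet d K, uδ δ x = u x) :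
    0 < D0 d K ∧
    ∃ C > (0:ℝ), ∀ ε > (0:ℝ), ∀ δ > (0:ℝ),
      Fphi d φ Ω K δ ε (uδ δ) ≤
        C * ∫ ξ in {ξ : EuclideanSpace ℝ (Fin d) | D0 d K * δ / ε ≤ ‖ξ‖},
          φ ξ * ‖ξ‖ ^ 2 :=
  stmt_1_general d hd K hK Ω hΩo hΩb φ φ₀ hφ u L hu uδ huδ1
end
end

section
/- Let k̂ ∈ ℤ^d \ {0} and τ > 0, and let δ, ε > 0 satisfy dist(K, K + k̂) + 2τ ≤ ε/δ. Then there exists a constant C, depending only on d, K, k̂ and τ, such that for every u ∈ L²(ℝ^d), writing u_k for the average of u over δ(k + K) (k ∈ ℤ^d), one has |u_0 − u_{k̂}|² ≤ C δ^{−2d} ( ∬_{δK × δK} |u(x) − u(y)|² dx dy + ∬_{{(x,y) ∈ δK × δ(K+k̂) : |x−y| < ε}} |u(x) − u(y)|² dx dy + ∬_{δ(K+k̂) × δ(K+k̂)} |u(x) − u(y)|² dx dy ). -/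
open MeasureTheory Filter Metric Set Pointwise
open scoped Topology ENNReal NNReal

noncomputable section

/-! Compare each cell average with the average over a small ball inside the cell. Two balls of a
common radius `r`, one in `K` and one in `K + k̂`, can be chosen so that all their points are at
distance `< dist(K, K + k̂) + 2τ ≤ ε/δ`; `r` depends only on `K`, `k̂` and `τ`. For sets `A`, `B`
of positive finite measure, Jensen's inequality on `A × B` gives
`(⨍_A u - ⨍_B u)² ≤ ⨍_{A×B} |u x - u y|²`. Applying it to the pairs (cell, ball), (ball, ball),
(ball, cell) after scaling by `δ`, and using `(a - d)² ≤ 3((a - b)² + (b - c)² + (c - d)²)`,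
gives the estimate with `C = 3 / |B_r|²`. -/

section Product

instance {α : Type*} [MeasurableSpace α] {μ ν : Measure α} [SFinite ν] [NeZero μ] [NeZero ν] :
    NeZero (μ.prod ν) :=
  ⟨by
    rw [← Measure.measure_univ_ne_zero, ← univ_prod_univ, Measure.prod_prod]
    simpa using ⟨NeZero.ne μ, NeZero.ne ν⟩⟩

variable {α : Type*} [MeasurableSpace α] {μ ν : Measure α} [IsFiniteMeasure μ] [IsFiniteMeasure ν]
  {u : α → ℝ}

theorem MeasureTheory.MemLp.fst_sub_snd {p : ℝ≥0∞} (hμ : MemLp u p μ) (hν : MemLp u p ν) :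
    MemLp (fun q : α × α => u q.1 - u q.2) p (μ.prod ν) :=
  (hμ.comp_fst ν).sub (hν.comp_snd μ)

variable [NeZero μ] [NeZero ν]

theorem average_fst_sub_snd (hμ : Integrable u μ) (hν : Integrable u ν) :
    ⨍ q, (u q.1 - u q.2) ∂(μ.prod ν) = ⨍ x, u x ∂μ - ⨍ x, u x ∂ν := by
  have hμ0 : μ.real univ ≠ 0 := measureReal_univ_ne_zero
  have hν0 : ν.real univ ≠ 0 := measureReal_univ_ne_zero
  rw [average_eq, average_eq, average_eq, integral_sub (hμ.comp_fst ν) (hν.comp_snd μ),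
    integral_fun_fst, integral_fun_snd, ← univ_prod_univ, measureReal_prod_prod]
  simp only [smul_eq_mul]
  field_simp

theorem sq_average_sub_average_le (hμ : MemLp u 2 μ) (hν : MemLp u 2 ν) :
    (⨍ x, u x ∂μ - ⨍ x, u x ∂ν) ^ 2 ≤ ⨍ q, (u q.1 - u q.2) ^ 2 ∂(μ.prod ν) := by
  have hL2 := hμ.fst_sub_snd hν
  rw [← average_fst_sub_snd (hμ.integrable one_le_two) (hν.integrable one_le_two)]
  exact (even_two.convexOn_pow).map_average_le (continuous_pow 2).continuousOn isClosed_univ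
    (by simp) (hL2.integrable one_le_two) hL2.integrable_sq

end Product

section SetProduct

variable {α : Type*} [MeasurableSpace α] {μ : Measure α} [SFinite μ] {u : α → ℝ} {A B : Set α}

theorem integrableOn_fst_sub_snd_sq (hu : MemLp u 2 μ) (hA : μ A ≠ ∞) (hB : μ B ≠ ∞) :
    IntegrableOn (fun q : α × α => (u q.1 - u q.2) ^ 2) (A ×ˢ B) (μ.prod μ) := by
  have := isFiniteMeasure_restrict.2 hA
  have := isFiniteMeasure_restrict.2 hB
  rw [IntegrableOn, ← Measure.prod_restrict]
  exact ((hu.restrict A).fst_sub_snd (hu.restrict B)).integrable_sq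

theorem sq_setAverage_sub_setAverage_le (hu : MemLp u 2 μ) (hA : 0 < μ.real A)
    (hB : 0 < μ.real B) :
    (⨍ x in A, u x ∂μ - ⨍ x in B, u x ∂μ) ^ 2 ≤ ⨍ q in A ×ˢ B, (u q.1 - u q.2) ^ 2 ∂(μ.prod μ) := by
  obtain ⟨hA0, hAtop⟩ := ENNReal.toReal_pos_iff.1 hA
  obtain ⟨hB0, hBtop⟩ := ENNReal.toReal_pos_iff.1 hB
  have := isFiniteMeasure_restrict.2 hAtop.ne
  have := isFiniteMeasure_restrict.2 hBtop.ne
  have : NeZero (μ.restrict A) := ⟨by simpa using hA0.ne'⟩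
  have : NeZero (μ.restrict B) := ⟨by simpa using hB0.ne'⟩
  rw [← Measure.prod_restrict]
  exact sq_average_sub_average_le (hu.restrict A) (hu.restrict B)

theorem sq_setAverage_sub_setAverage_le_of_prod_subset (hu : MemLp u 2 μ) {c : ℝ} (hc : 0 < c)
    (hA : c ≤ μ.real A) (hB : c ≤ μ.real B) {T : Set (α × α)} (hT : A ×ˢ B ⊆ T)
    (hTi : IntegrableOn (fun q : α × α => (u q.1 - u q.2) ^ 2) T (μ.prod μ)) :
    (⨍ x in A, u x ∂μ - ⨍ x in B, u x ∂μ) ^ 2 ≤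
      (c ^ 2)⁻¹ * ∫ q in T, (u q.1 - u q.2) ^ 2 ∂(μ.prod μ) := by
  have hAB : c ^ 2 ≤ (μ.prod μ).real (A ×ˢ B) := by
    rw [measureReal_prod_prod, sq]
    exact mul_le_mul hA hB hc.le (hc.trans_le hA).le
  calc (⨍ x in A, u x ∂μ - ⨍ x in B, u x ∂μ) ^ 2
      ≤ ((μ.prod μ).real (A ×ˢ B))⁻¹ * ∫ q in A ×ˢ B, (u q.1 - u q.2) ^ 2 ∂(μ.prod μ) := by
        rw [← smul_eq_mul, ← setAverage_eq]
        exact sq_setAverage_sub_setAverage_le hu (hc.trans_le hA) (hc.trans_le hB)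
    _ ≤ (c ^ 2)⁻¹ * ∫ q in T, (u q.1 - u q.2) ^ 2 ∂(μ.prod μ) := by
        gcongr ?_ * ?_
        · exact inv_anti₀ (by positivity) hAB
        · exact setIntegral_mono_set hTi (.of_forall fun _ => sq_nonneg _) hT.eventuallyLE

end SetProduct

theorem exists_balls_dist_lt_setDist_add {α : Type*} [PseudoMetricSpace α] {U V A B : Set α}
    (hU : IsOpen U) (hV : IsOpen V) (hAU : A ⊆ closure U) (hBV : B ⊆ closure V)
    (hA : A.Nonempty) (hB : B.Nonempty) {τ : ℝ} (hτ : 0 < τ) :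
    ∃ a b : α, ∃ r > 0, ball a r ⊆ U ∧ ball b r ⊆ V ∧
      ∀ x ∈ ball a r, ∀ y ∈ ball b r, dist x y < setDist A B + τ := by
  obtain ⟨x₀, hx₀⟩ := hA
  obtain ⟨y₀, hy₀⟩ := hB
  obtain ⟨_, ⟨x, hx, y, hy, rfl⟩, hxy⟩ :=
    Real.lt_sInf_add_pos (s := {r : ℝ | ∃ x ∈ A, ∃ y ∈ B, r = dist x y})
      ⟨dist x₀ y₀, x₀, hx₀, y₀, hy₀, rfl⟩ (half_pos hτ)
  obtain ⟨a, haU, hxa⟩ := mem_closure_iff.1 (hAU hx) (τ / 8) (by positivity)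
  obtain ⟨b, hbV, hyb⟩ := mem_closure_iff.1 (hBV hy) (τ / 8) (by positivity)
  obtain ⟨ra, hra, haU'⟩ := isOpen_iff.1 hU a haU
  obtain ⟨rb, hrb, hbV'⟩ := isOpen_iff.1 hV b hbV
  refine ⟨a, b, min (min ra rb) (τ / 8), by positivity,
    (ball_subset_ball (by simp)).trans haU', (ball_subset_ball (by simp)).trans hbV',
    fun x' hx' y' hy' => ?_⟩
  have hx'a : dist x' a < τ / 8 := (mem_ball.1 hx').trans_le (min_le_right _ _)
  have hy'b : dist y' b < τ / 8 := (mem_ball.1 hy').trans_le (min_le_right _ _)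
  have h₁ := dist_triangle4 x' a x y
  have h₂ := dist_triangle4 x' y b y'
  rw [dist_comm a] at h₁
  rw [dist_comm b] at h₂
  unfold setDist
  linarith

theorem sq_sub_le_three_mul (a b c d : ℝ) :
    (a - d) ^ 2 ≤ 3 * ((a - b) ^ 2 + (b - c) ^ 2 + (c - d) ^ 2) := by
  nlinarith [sq_nonneg (a - 2 * b + c), sq_nonneg (b - 2 * c + d), sq_nonneg (a - b - c + d)]

theorem measureReal_ball_pos {X : Type*} [PseudoMetricSpace X] [ProperSpace X]
    [MeasurableSpace X] (μ : Measure X) [μ.IsOpenPosMeasure] [IsFiniteMeasureOnCompacts μ]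
    (x : X) {r : ℝ} (hr : 0 < r) : 0 < μ.real (ball x r) :=
  ENNReal.toReal_pos (measure_ball_pos μ x hr).ne' measure_ball_lt_top.ne

section Haar

variable {E : Type*} [NormedAddCommGroup E] [NormedSpace ℝ E] [MeasurableSpace E] [BorelSpace E]
  [FiniteDimensional ℝ E] (μ : Measure E) [μ.IsAddHaarMeasure]

theorem addHaar_smul_ne_top {S : Set E} (hS : μ S ≠ ∞) (δ : ℝ) : μ (δ • S) ≠ ∞ := by
  rw [Measure.addHaar_smul]
  exact ENNReal.mul_ne_top ENNReal.ofReal_ne_top hS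

theorem le_measureReal_smul_of_ball_subset {S : Set E} {x : E} {r δ : ℝ} (hxS : ball x r ⊆ S)
    (hS : μ S ≠ ∞) (hδ : 0 ≤ δ) :
    δ ^ Module.finrank ℝ E * μ.real (ball 0 r) ≤ μ.real (δ • S) := by
  have hball : μ.real (ball 0 r) ≤ μ.real S := by
    rw [measureReal_def, ← Measure.addHaar_ball_center μ x]
    exact measureReal_mono hxS hS
  rw [measureReal_def (s := δ • S), Measure.addHaar_smul_of_nonneg μ hδ, ENNReal.toReal_mul,
    ENNReal.toReal_ofReal (by positivity)]
  exact mul_le_mul_of_nonneg_left hball (by positivity)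

theorem sq_setAverage_smul_sub_setAverage_smul_le {u : E → ℝ} (hu : MemLp u 2 μ) {S S' : Set E}
    (hS : μ S ≠ ∞) (hS' : μ S' ≠ ∞) {a b : E} {r δ ε : ℝ} (hr : 0 < r) (haS : ball a r ⊆ S)
    (hbS' : ball b r ⊆ S') (hδ : 0 < δ) (hab : ∀ x ∈ ball a r, ∀ y ∈ ball b r, dist x y < ε / δ) :
    (⨍ x in δ • S, u x ∂μ - ⨍ x in δ • S', u x ∂μ) ^ 2 ≤
      3 * (μ.real (ball 0 r) ^ 2)⁻¹ * (δ ^ (2 * Module.finrank ℝ E))⁻¹ *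
        ((∫ q in (δ • S) ×ˢ (δ • S), (u q.1 - u q.2) ^ 2 ∂(μ.prod μ)) +
          (∫ q in ((δ • S) ×ˢ (δ • S')) ∩ {q : E × E | dist q.1 q.2 < ε},
            (u q.1 - u q.2) ^ 2 ∂(μ.prod μ)) +
          ∫ q in (δ • S') ×ˢ (δ • S'), (u q.1 - u q.2) ^ 2 ∂(μ.prod μ)) := by
  set c := δ ^ Module.finrank ℝ E * μ.real (ball 0 r)
  have hc : 0 < c := mul_pos (by positivity) (measureReal_ball_pos μ 0 hr)
  have hcS := le_measureReal_smul_of_ball_subset μ haS hS hδ.le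
  have hca := le_measureReal_smul_of_ball_subset μ (subset_refl (ball a r))
    measure_ball_lt_top.ne hδ.le
  have hcb := le_measureReal_smul_of_ball_subset μ (subset_refl (ball b r))
    measure_ball_lt_top.ne hδ.le
  have hcS' := le_measureReal_smul_of_ball_subset μ hbS' hS' hδ.le
  have hδS := addHaar_smul_ne_top μ hS δ
  have hδS' := addHaar_smul_ne_top μ hS' δ
  have hnear : (δ • ball a r) ×ˢ (δ • ball b r) ⊆ {q : E × E | dist q.1 q.2 < ε} := by
    rintro ⟨_, _⟩ ⟨⟨x, hx, rfl⟩, ⟨y, hy, rfl⟩⟩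
    change dist (δ • x) (δ • y) < ε
    rw [dist_smul₀, Real.norm_of_nonneg hδ.le, ← lt_div_iff₀' hδ]
    exact hab x hx y hy
  have h₁ := sq_setAverage_sub_setAverage_le_of_prod_subset hu hc hcS hca
    (prod_mono subset_rfl (smul_set_mono haS)) (integrableOn_fst_sub_snd_sq hu hδS hδS)
  have h₂ := sq_setAverage_sub_setAverage_le_of_prod_subset hu hc hca hcb
    (subset_inter (prod_mono (smul_set_mono haS) (smul_set_mono hbS')) hnear)
    ((integrableOn_fst_sub_snd_sq hu hδS hδS').mono_set inter_subset_left)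
  have h₃ := sq_setAverage_sub_setAverage_le_of_prod_subset hu hc hcb hcS'
    (prod_mono (smul_set_mono hbS') subset_rfl) (integrableOn_fst_sub_snd_sq hu hδS' hδS')
  calc _ ≤ 3 * (_ + _ + _) := sq_sub_le_three_mul _ (⨍ x in δ • ball a r, u x ∂μ)
        (⨍ x in δ • ball b r, u x ∂μ) _
    _ ≤ 3 * ((c ^ 2)⁻¹ * _ + (c ^ 2)⁻¹ * _ + (c ^ 2)⁻¹ * _) := by gcongr
    _ = _ := by ring

end Haar

theorem stmt_4_general (d : ℕ)
    (K : Set (EuclideanSpace ℝ (Fin d))) (hK : IsAdmissibleK d K)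
    (khat : Fin d → ℤ) (τ : ℝ) (hτ : 0 < τ) :
    ∃ C > (0:ℝ), ∀ δ > (0:ℝ), ∀ ε > (0:ℝ),
      setDist K (lat d khat +ᵥ K) + 2 * τ ≤ ε / δ →
      ∀ u : EuclideanSpace ℝ (Fin d) → ℝ, MemLp u 2 volume →
        ((⨍ x in δ • K, u x) - ⨍ x in δ • (lat d khat +ᵥ K), u x) ^ 2 ≤
          C * (δ ^ (2 * d))⁻¹ *
            ((∫ p in (δ • K) ×ˢ (δ • K),
                (u p.1 - u p.2) ^ 2) +
             (∫ p in ((δ • K) ×ˢ (δ • (lat d khat +ᵥ K))) ∩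
                {p : EuclideanSpace ℝ (Fin d) × EuclideanSpace ℝ (Fin d) | dist p.1 p.2 < ε},
                (u p.1 - u p.2) ^ 2) +
             (∫ p in (δ • (lat d khat +ᵥ K)) ×ˢ (δ • (lat d khat +ᵥ K)),
                (u p.1 - u p.2) ^ 2)) := by
  obtain ⟨⟨U, hUo, hUc, hUb, rfl⟩, -, -⟩ := hK
  have hKc : IsCompact (closure U) := hUb.isCompact_closure
  obtain ⟨a, b, r, hr, haU, hbU, hab⟩ :=
    exists_balls_dist_lt_setDist_add hUo (hUo.vadd (lat d khat)) subset_rfl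
      (closure_vadd _ U).superset hUc.nonempty.closure hUc.nonempty.closure.vadd_set
      (by positivity : 0 < 2 * τ)
  refine ⟨3 * (volume.real (ball (0 : EuclideanSpace ℝ (Fin d)) r) ^ 2)⁻¹,
    by have := measureReal_ball_pos volume (0 : EuclideanSpace ℝ (Fin d)) hr; positivity,
    fun δ hδ ε _ hε u hu => ?_⟩
  have := sq_setAverage_smul_sub_setAverage_smul_le volume hu hKc.measure_ne_top
    (hKc.vadd _).measure_ne_top hr (haU.trans subset_closure)
    (hbU.trans (vadd_set_mono subset_closure)) hδ fun x hx y hy => (hab x hx y hy).trans_le hε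
  rwa [finrank_euclideanSpace_fin, ← Measure.volume_eq_prod] at this

/-- estimate of the difference of cell averages via short- and long-range
interaction energies. -/
theorem stmt_4 (d : ℕ) (hd : 1 ≤ d)
    (K : Set (EuclideanSpace ℝ (Fin d))) (hK : IsAdmissibleK d K)
    (khat : Fin d → ℤ) (hkhat : khat ≠ 0) (τ : ℝ) (hτ : 0 < τ) :
    ∃ C > (0:ℝ), ∀ δ > (0:ℝ), ∀ ε > (0:ℝ),
      setDist K (lat d khat +ᵥ K) + 2 * τ ≤ ε / δ →
      ∀ u : EuclideanSpace ℝ (Fin d) → ℝ, MemLp u 2 volume →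
        ((⨍ x in δ • K, u x) - ⨍ x in δ • (lat d khat +ᵥ K), u x) ^ 2 ≤
          C * (δ ^ (2 * d))⁻¹ *
            ((∫ p in (δ • K) ×ˢ (δ • K),
                (u p.1 - u p.2) ^ 2) +
             (∫ p in ((δ • K) ×ˢ (δ • (lat d khat +ᵥ K))) ∩
                {p : EuclideanSpace ℝ (Fin d) × EuclideanSpace ℝ (Fin d) | dist p.1 p.2 < ε},
                (u p.1 - u p.2) ^ 2) +
             (∫ p in (δ • (lat d khat +ᵥ K)) ×ˢ (δ • (lat d khat +ᵥ K)),
                (u p.1 - u p.2) ^ 2)) :=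
  stmt_4_general d K hK khat τ hτ
end
end

section
/- Let A ⊂ ℝ^d be a bounded measurable set, let ε > 0, ε₁ ∈ (0, ε/3), and let M, N be positive integers. Assume: (i) there exist points η¹, …, η^M ∈ ℝ^d such that A ⊆ ⋃_{i=1}^M B(η^i, ε₁); (ii) for every i, j ∈ {1,…,M} there exist points ζ₀ = η^i, ζ₁, …, ζ_L, ζ_{L+1} = η^j with L ≤ N, |ζ_{l+1} − ζ_l| ≤ ε₁ for all 0 ≤ l ≤ L, and B(ζ_l, ε₁) ⊆ A for all 1 ≤ l ≤ L. Then there exists a constant C, depending only on d, M and N, such that for every u ∈ L²(A): ∬_{A×A} |u(x) − u(y)|² dx dy ≤ C ∬_{{(x,y) ∈ A×A : |x−y| < ε}} |u(x) − u(y)|² dx dy. -/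
open MeasureTheory Filter Metric Set Pointwise
open scoped Topology ENNReal NNReal

noncomputable section

/-!
Cover `A × A` by the `M²` products of the pieces `A ∩ B(ηⁱ, ε₁)`. Averaging
`|u x - u y|² ≤ 2 |u x - u z|² + 2 |u z - u y|²` over `z` in a ball `B` gives
`|B| ∬_{S×T} ≤ 2|T| ∬_{S×B} + 2|S| ∬_{B×T}`; applied along the chain from `ηⁱ` to `ηʲ`, all of
whose balls have the same volume, this moves one end of the interaction one link at a time at the
cost of a factor `3`. Consecutive balls of the chain only contain pairs at distance `< 3ε₁ < ε`,
so `C = M² 3^(N+1)` works.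
-/

lemma ofReal_sq_sub_le (a b c : ℝ) :
    ENNReal.ofReal ((a - b) ^ 2) ≤
      2 * ENNReal.ofReal ((a - c) ^ 2) + 2 * ENNReal.ofReal ((c - b) ^ 2) := by
  have h : (a - b) ^ 2 ≤ 2 * (a - c) ^ 2 + 2 * (c - b) ^ 2 := by
    nlinarith [sq_nonneg (a + b - 2 * c)]
  calc ENNReal.ofReal ((a - b) ^ 2) ≤ ENNReal.ofReal (2 * (a - c) ^ 2 + 2 * (c - b) ^ 2) :=
        ENNReal.ofReal_le_ofReal h
    _ = _ := by
        rw [ENNReal.ofReal_add (by positivity) (by positivity), ENNReal.ofReal_mul zero_le_two,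
          ENNReal.ofReal_mul zero_le_two, ENNReal.ofReal_ofNat]

lemma ENNReal.toReal_le_natCast_mul_toReal {a b : ℝ≥0∞} {c : ℕ} (hba : b ≤ a) (h : a ≤ c * b) :
    a.toReal ≤ c * b.toReal := by
  by_cases hb : b = ∞
  · simp [top_le_iff.mp (hb ▸ hba), hb]
  · simpa using ENNReal.toReal_mono (ENNReal.mul_ne_top (ENNReal.natCast_ne_top c) hb) h

section PairEnergy

variable {α : Type*} [MeasurableSpace α]

def pairEnergy (μ : Measure α) (w : α → ℝ) (s : Set (α × α)) : ℝ≥0∞ :=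
  ∫⁻ p in s, ENNReal.ofReal ((w p.1 - w p.2) ^ 2) ∂μ.prod μ

variable {μ : Measure α} {w : α → ℝ}

lemma pairEnergy_mono {s t : Set (α × α)} (h : s ⊆ t) :
    pairEnergy μ w s ≤ pairEnergy μ w t :=
  lintegral_mono_set h

lemma pairEnergy_prod [SFinite μ] (hw : Measurable w) (S T : Set α) :
    pairEnergy μ w (S ×ˢ T) = ∫⁻ x in S, ∫⁻ y in T, ENNReal.ofReal ((w x - w y) ^ 2) ∂μ ∂μ := by
  rw [pairEnergy, ← Measure.prod_restrict, lintegral_prod _ (by fun_prop)]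

lemma pairEnergy_le_sum_of_subset_iUnion {ι : Type*} [Fintype ι] {A : Set α} {U : ι → Set α}
    (hA : A ⊆ ⋃ i, U i) :
    pairEnergy μ w (A ×ˢ A) ≤ ∑ p : ι × ι, pairEnergy μ w ((A ∩ U p.1) ×ˢ (A ∩ U p.2)) := by
  have hcover : A ×ˢ A ⊆ ⋃ p : ι × ι, (A ∩ U p.1) ×ˢ (A ∩ U p.2) := by
    rintro ⟨x, y⟩ ⟨hx, hy⟩
    obtain ⟨i, hxi⟩ := mem_iUnion.mp (hA hx)
    obtain ⟨j, hyj⟩ := mem_iUnion.mp (hA hy)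
    exact mem_iUnion.mpr ⟨(i, j), ⟨hx, hxi⟩, ⟨hy, hyj⟩⟩
  calc pairEnergy μ w (A ×ˢ A)
      ≤ pairEnergy μ w (⋃ p : ι × ι, (A ∩ U p.1) ×ˢ (A ∩ U p.2)) := pairEnergy_mono hcover
    _ ≤ ∑' p : ι × ι, pairEnergy μ w ((A ∩ U p.1) ×ˢ (A ∩ U p.2)) := lintegral_iUnion_le _ _
    _ = _ := tsum_fintype _

lemma setLIntegral_setLIntegral_add {f : α → ℝ≥0∞} (hf : Measurable f) (g : α → ℝ≥0∞)
    (S T : Set α) :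
    ∫⁻ x in S, ∫⁻ y in T, (f x + g y) ∂μ ∂μ =
      μ T * ∫⁻ x in S, f x ∂μ + μ S * ∫⁻ y in T, g y ∂μ := by
  simp_rw [lintegral_add_left measurable_const, setLIntegral_const]
  rw [lintegral_add_right _ measurable_const, setLIntegral_const, lintegral_mul_const _ hf]
  ring

lemma measure_mul_pairEnergy_le [SFinite μ] (hw : Measurable w) (S T B : Set α) :
    μ B * pairEnergy μ w (S ×ˢ T) ≤
      2 * μ T * pairEnergy μ w (S ×ˢ B) + 2 * μ S * pairEnergy μ w (B ×ˢ T) := by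
  rw [pairEnergy_prod hw, pairEnergy_prod hw, pairEnergy_prod hw]
  set F : α → α → ℝ≥0∞ := fun x y => ENNReal.ofReal ((w x - w y) ^ 2)
  have hF : Measurable fun p : α × α => F p.1 p.2 := by fun_prop
  have hFx (x : α) : Measurable (F x) := hF.of_uncurry_left
  have hFy (y : α) : Measurable (F · y) := hF.of_uncurry_right
  have hpoint (x y : α) :
      μ B * F x y ≤ 2 * ∫⁻ z in B, F x z ∂μ + 2 * ∫⁻ z in B, F z y ∂μ := by
    calc μ B * F x y = ∫⁻ _ in B, F x y ∂μ := by rw [setLIntegral_const, mul_comm]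
      _ ≤ ∫⁻ z in B, (2 * F x z + 2 * F z y) ∂μ := lintegral_mono fun z => ofReal_sq_sub_le _ _ _
      _ = _ := by
        rw [lintegral_add_left ((hFx x).const_mul 2), lintegral_const_mul 2 (hFx x),
          lintegral_const_mul 2 (hFy y)]
  have hswap : ∫⁻ y in T, ∫⁻ z in B, F z y ∂μ ∂μ = ∫⁻ z in B, ∫⁻ y in T, F z y ∂μ ∂μ :=
    lintegral_lintegral_swap (hF.comp measurable_swap).aemeasurable
  calc μ B * ∫⁻ x in S, ∫⁻ y in T, F x y ∂μ ∂μ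
      = ∫⁻ x in S, ∫⁻ y in T, μ B * F x y ∂μ ∂μ := by
        rw [← lintegral_const_mul _ hF.lintegral_prod_right']
        exact lintegral_congr fun x => (lintegral_const_mul _ (hFx x)).symm
    _ ≤ ∫⁻ x in S, ∫⁻ y in T, (2 * ∫⁻ z in B, F x z ∂μ + 2 * ∫⁻ z in B, F z y ∂μ) ∂μ ∂μ :=
        lintegral_mono fun x => lintegral_mono fun y => hpoint x y
    _ = μ T * ∫⁻ x in S, 2 * ∫⁻ z in B, F x z ∂μ ∂μ
          + μ S * ∫⁻ y in T, 2 * ∫⁻ z in B, F z y ∂μ ∂μ :=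
        setLIntegral_setLIntegral_add (hF.lintegral_prod_right'.const_mul 2) _ S T
    _ = _ := by
        rw [lintegral_const_mul _ hF.lintegral_prod_right',
          lintegral_const_mul _ hF.lintegral_prod_left', hswap]
        ring

lemma pairEnergy_chain_le [SFinite μ] (hw : Measurable w) {v E : ℝ≥0∞} (hv : v ≠ 0)
    (hv' : v ≠ ∞) (L : ℕ) {X : ℕ → Set α} (hle : ∀ k ≤ L + 1, μ (X k) ≤ v)
    (heq : ∀ k, 1 ≤ k → k ≤ L → μ (X k) = v)
    (hstep : ∀ k ≤ L, pairEnergy μ w (X k ×ˢ X (k + 1)) ≤ E) :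
    pairEnergy μ w (X 0 ×ˢ X (L + 1)) ≤ 3 ^ (L + 1) * E := by
  induction L generalizing X with
  | zero => exact (hstep 0 le_rfl).trans (le_mul_of_one_le_left' (by norm_num))
  | succ L ih =>
    have htail : pairEnergy μ w (X 1 ×ˢ X (L + 2)) ≤ 3 ^ (L + 1) * E :=
      ih (X := fun k => X (k + 1)) (fun k hk => hle _ (by omega))
        (fun k hk hkL => heq _ (by omega) (by omega)) (fun k hk => hstep _ (by omega))
    have hthree : (2 : ℝ≥0∞) + 2 * 3 ^ (L + 1) ≤ 3 ^ (L + 2) := by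
      have : (2 : ℝ≥0∞) ≤ 3 ^ (L + 1) :=
        (by norm_num : (2 : ℝ≥0∞) ≤ 3 ^ 1).trans (pow_le_pow_right₀ (by norm_num) (by omega))
      calc (2 : ℝ≥0∞) + 2 * 3 ^ (L + 1) ≤ 3 ^ (L + 1) + 2 * 3 ^ (L + 1) := by gcongr
        _ = 3 ^ (L + 2) := by ring
    refine (ENNReal.mul_le_mul_iff_right hv hv').mp ?_
    calc v * pairEnergy μ w (X 0 ×ˢ X (L + 2))
        = μ (X 1) * pairEnergy μ w (X 0 ×ˢ X (L + 2)) := by rw [heq 1 le_rfl (by omega)]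
      _ ≤ 2 * μ (X (L + 2)) * pairEnergy μ w (X 0 ×ˢ X 1)
            + 2 * μ (X 0) * pairEnergy μ w (X 1 ×ˢ X (L + 2)) :=
          measure_mul_pairEnergy_le hw _ _ _
      _ ≤ 2 * v * E + 2 * v * (3 ^ (L + 1) * E) := by
          gcongr
          exacts [hle _ le_rfl, hstep 0 (by omega), hle 0 (by omega)]
      _ = v * ((2 + 2 * 3 ^ (L + 1)) * E) := by ring
      _ ≤ v * (3 ^ (L + 2) * E) := by gcongr

end PairEnergy

lemma prod_subset_dist_lt {E : Type*} [PseudoMetricSpace E] {A : Set E} {c c' : E} {r ε : ℝ}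
    (hcc' : dist c c' ≤ r) (hrε : 3 * r ≤ ε) :
    (A ∩ ball c r) ×ˢ (A ∩ ball c' r) ⊆ (A ×ˢ A) ∩ {p | dist p.1 p.2 < ε} := by
  rintro ⟨x, y⟩ ⟨⟨hxA, hx⟩, ⟨hyA, hy⟩⟩
  refine ⟨⟨hxA, hyA⟩, ?_⟩
  have := dist_triangle4 x c c' y
  rw [mem_ball] at hx hy
  rw [dist_comm y] at hy
  show dist x y < ε
  linarith

lemma pairEnergy_ball_chain_le {E : Type*} [NormedAddCommGroup E] [NormedSpace ℝ E]
    [MeasurableSpace E] [BorelSpace E] [FiniteDimensional ℝ E] (μ : Measure E)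
    [μ.IsAddHaarMeasure] {w : E → ℝ} (hw : Measurable w) {A : Set E} {r ε : ℝ} (hr : 0 < r)
    (hrε : 3 * r ≤ ε) {L : ℕ} {ζ : ℕ → E} (hζ : ∀ l ≤ L, dist (ζ (l + 1)) (ζ l) ≤ r)
    (hball : ∀ l, 1 ≤ l → l ≤ L → ball (ζ l) r ⊆ A) :
    pairEnergy μ w ((A ∩ ball (ζ 0) r) ×ˢ (A ∩ ball (ζ (L + 1)) r)) ≤
      3 ^ (L + 1) * pairEnergy μ w ((A ×ˢ A) ∩ {p | dist p.1 p.2 < ε}) := by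
  have hvol (x : E) : μ (ball x r) = μ (ball 0 r) := Measure.addHaar_ball_center μ x r
  refine pairEnergy_chain_le (X := fun k => A ∩ ball (ζ k) r) hw
    (measure_ball_pos μ 0 hr).ne' measure_ball_lt_top.ne L
    (fun k _ => (measure_mono inter_subset_right).trans (hvol _).le)
    (fun k hk hkL => by simp only [inter_eq_right.mpr (hball k hk hkL), hvol])
    (fun k hk => pairEnergy_mono (prod_subset_dist_lt ?_ hrε))
  rw [dist_comm]
  exact hζ k hk

lemma setIntegral_sq_sub_eq_toReal_pairEnergy {α : Type*} [MeasurableSpace α] {μ : Measure α}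
    [SFinite μ] {u w : α → ℝ} (hw : Measurable w) {A : Set α} (huw : u =ᵐ[μ.restrict A] w)
    {s : Set (α × α)} (hs : s ⊆ A ×ˢ A) :
    ∫ p in s, (u p.1 - u p.2) ^ 2 ∂μ.prod μ = (pairEnergy μ w s).toReal := by
  have hae : ∀ᵐ p ∂(μ.prod μ).restrict s, (u p.1 - u p.2) ^ 2 = (w p.1 - w p.2) ^ 2 := by
    refine ae_restrict_of_ae_restrict_of_subset hs ?_
    rw [← Measure.prod_restrict]
    filter_upwards [Measure.quasiMeasurePreserving_fst.ae_eq huw,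
      Measure.quasiMeasurePreserving_snd.ae_eq huw] with p h₁ h₂
    simp only [Function.comp_apply] at h₁ h₂
    rw [h₁, h₂]
  rw [integral_congr_ae hae, integral_eq_lintegral_of_nonneg_ae
    (Eventually.of_forall fun p => sq_nonneg _)
    (by fun_prop : Measurable fun p : α × α => (w p.1 - w p.2) ^ 2).aestronglyMeasurable]
  rfl

theorem stmt_5_general (d : ℕ) (M N : ℕ) (hM : 0 < M) :
    ∃ C > (0:ℝ),
      ∀ A : Set (EuclideanSpace ℝ (Fin d)), Bornology.IsBounded A → MeasurableSet A →
      ∀ ε ε₁ : ℝ, 0 < ε₁ → ε₁ < ε / 3 →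
      ∀ η : Fin M → EuclideanSpace ℝ (Fin d),
        (A ⊆ ⋃ i : Fin M, Metric.ball (η i) ε₁) →
        (∀ i j : Fin M, ∃ L : ℕ, L ≤ N ∧ ∃ ζ : ℕ → EuclideanSpace ℝ (Fin d),
          ζ 0 = η i ∧ ζ (L + 1) = η j ∧
          (∀ l ≤ L, dist (ζ (l + 1)) (ζ l) ≤ ε₁) ∧
          (∀ l, 1 ≤ l → l ≤ L → Metric.ball (ζ l) ε₁ ⊆ A)) →
      ∀ u : EuclideanSpace ℝ (Fin d) → ℝ, MemLp u 2 (volume.restrict A) →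
        (∫ p in A ×ˢ A, (u p.1 - u p.2) ^ 2) ≤
          C * ∫ p in (A ×ˢ A) ∩
            {p : EuclideanSpace ℝ (Fin d) × EuclideanSpace ℝ (Fin d) | dist p.1 p.2 < ε},
            (u p.1 - u p.2) ^ 2 := by
  refine ⟨(M ^ 2 * 3 ^ (N + 1) : ℕ), by positivity, ?_⟩
  intro A _ _ ε ε₁ hε₁ hε₁ε η hcover hchain u hu
  obtain ⟨w, hw, huw⟩ := hu.1.aemeasurable
  set short := (A ×ˢ A) ∩
    {p : EuclideanSpace ℝ (Fin d) × EuclideanSpace ℝ (Fin d) | dist p.1 p.2 < ε}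
  have hpair (i j : Fin M) : pairEnergy volume w ((A ∩ ball (η i) ε₁) ×ˢ (A ∩ ball (η j) ε₁))
      ≤ 3 ^ (N + 1) * pairEnergy volume w short := by
    obtain ⟨L, hLN, ζ, hζ0, hζL, hζ, hball⟩ := hchain i j
    rw [← hζ0, ← hζL]
    refine (pairEnergy_ball_chain_le volume hw hε₁ (by linarith) hζ hball).trans ?_
    gcongr
    norm_num
  have henergy : pairEnergy volume w (A ×ˢ A) ≤
      (M ^ 2 * 3 ^ (N + 1) : ℕ) * pairEnergy volume w short :=
    calc pairEnergy volume w (A ×ˢ A)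
        ≤ ∑ p : Fin M × Fin M,
            pairEnergy volume w ((A ∩ ball (η p.1) ε₁) ×ˢ (A ∩ ball (η p.2) ε₁)) :=
          pairEnergy_le_sum_of_subset_iUnion hcover
      _ ≤ ∑ _p : Fin M × Fin M, 3 ^ (N + 1) * pairEnergy volume w short :=
          Finset.sum_le_sum fun p _ => hpair p.1 p.2
      _ = (M ^ 2 * 3 ^ (N + 1) : ℕ) * pairEnergy volume w short := by
          simp [Finset.card_univ, sq, mul_assoc]
  rw [Measure.volume_eq_prod,
    setIntegral_sq_sub_eq_toReal_pairEnergy hw huw subset_rfl,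
    setIntegral_sq_sub_eq_toReal_pairEnergy hw huw inter_subset_left]
  exact ENNReal.toReal_le_natCast_mul_toReal (pairEnergy_mono inter_subset_left) henergy

/-- long-range interactions are controlled by short-range interactions on a
`chain-connected' set. -/
theorem stmt_5 (d : ℕ) (hd : 1 ≤ d) (M N : ℕ) (hM : 0 < M) (hN : 0 < N) :
    ∃ C > (0:ℝ),
      ∀ A : Set (EuclideanSpace ℝ (Fin d)), Bornology.IsBounded A → MeasurableSet A →
      ∀ ε ε₁ : ℝ, 0 < ε₁ → ε₁ < ε / 3 →
      ∀ η : Fin M → EuclideanSpace ℝ (Fin d),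
        (A ⊆ ⋃ i : Fin M, Metric.ball (η i) ε₁) →
        (∀ i j : Fin M, ∃ L : ℕ, L ≤ N ∧ ∃ ζ : ℕ → EuclideanSpace ℝ (Fin d),
          ζ 0 = η i ∧ ζ (L + 1) = η j ∧
          (∀ l ≤ L, dist (ζ (l + 1)) (ζ l) ≤ ε₁) ∧
          (∀ l, 1 ≤ l → l ≤ L → Metric.ball (ζ l) ε₁ ⊆ A)) →
      ∀ u : EuclideanSpace ℝ (Fin d) → ℝ, MemLp u 2 (volume.restrict A) →
        (∫ p in A ×ˢ A, (u p.1 - u p.2) ^ 2) ≤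
          C * ∫ p in (A ×ˢ A) ∩
            {p : EuclideanSpace ℝ (Fin d) × EuclideanSpace ℝ (Fin d) | dist p.1 p.2 < ε},
            (u p.1 - u p.2) ^ 2 :=
  stmt_5_general d M N hM
end
end

section
/- Let X, Y ⊆ ℝ^d be measurable sets with 0 < |X| < ∞ and 0 < |Y| < ∞, and let A ⊆ X, B ⊆ Y be measurable with |A| > 0 and |B| > 0. Then for every u ∈ L²(X ∪ Y): ( ⨍_X u dx − ⨍_Y u dx )² ≤ 3 ( (1/(|X||A|)) ∬_{X×A} (u(x) − u(y))² dx dy + (1/(|A||B|)) ∬_{A×B} (u(x) − u(y))² dx dy + (1/(|B||Y|)) ∬_{B×Y} (u(x) − u(y))² dx dy ). -/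
open MeasureTheory Filter Metric Set Pointwise
open scoped Topology ENNReal NNReal

noncomputable section

/-!
By Jensen, or Cauchy–Schwarz, on the product of the normalized measures, `(⨍_S f - ⨍_T g)²` is
at most the average of `(f x - g y)²` over `S × T`. The difference `⨍_X u - ⨍_Y u` splits as a sum
of three such differences through `⨍_A u` and `⨍_B u`, and `(a + b + c)² ≤ 3 (a² + b² + c²)`.
-/

namespace MeasureTheory

variable {α β : Type*} [MeasurableSpace α] [MeasurableSpace β] {μ : Measure α} {ν : Measure β}

theorem sq_average_le_average_sq [IsFiniteMeasure μ] [NeZero μ] {f : α → ℝ}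
    (hf : MemLp f 2 μ) : (⨍ x, f x ∂μ) ^ 2 ≤ ⨍ x, f x ^ 2 ∂μ :=
  even_two.convexOn_pow.map_average_le (continuous_pow 2).continuousOn isClosed_univ
    (by simp) (hf.integrable one_le_two) hf.integrable_sq

theorem average_fun_fst_sub_fun_snd [IsFiniteMeasure μ] [NeZero μ] [IsFiniteMeasure ν] [NeZero ν]
    {f : α → ℝ} {g : β → ℝ} (hf : Integrable f μ) (hg : Integrable g ν) :
    ⨍ z, (f z.1 - g z.2) ∂μ.prod ν = ⨍ x, f x ∂μ - ⨍ y, g y ∂ν := by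
  have hμ : μ.real univ ≠ 0 := measureReal_univ_ne_zero
  have hν : ν.real univ ≠ 0 := measureReal_univ_ne_zero
  rw [average_eq, average_eq, average_eq, integral_sub (hf.comp_fst ν) (hg.comp_snd μ),
    integral_fun_fst, integral_fun_snd, ← univ_prod_univ, measureReal_prod_prod]
  simp only [smul_eq_mul]
  field_simp

theorem sq_average_sub_average_le [IsFiniteMeasure μ] [NeZero μ] [IsFiniteMeasure ν] [NeZero ν]
    {f : α → ℝ} {g : β → ℝ} (hf : MemLp f 2 μ) (hg : MemLp g 2 ν) :
    (⨍ x, f x ∂μ - ⨍ y, g y ∂ν) ^ 2 ≤ ⨍ z, (f z.1 - g z.2) ^ 2 ∂μ.prod ν := by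
  have : NeZero (μ.prod ν) := ⟨by
    rw [Ne, ← Measure.measure_univ_eq_zero, ← univ_prod_univ, Measure.prod_prod]; simp [NeZero.ne]⟩
  rw [← average_fun_fst_sub_fun_snd (hf.integrable one_le_two) (hg.integrable one_le_two)]
  exact sq_average_le_average_sq ((hf.comp_fst ν).sub (hg.comp_snd μ))

theorem sq_setAverage_sub_setAverage_le [SFinite μ] [SFinite ν] {f : α → ℝ} {g : β → ℝ}
    {s : Set α} {t : Set β} (hs₀ : μ s ≠ 0) (hs : μ s ≠ ∞) (ht₀ : ν t ≠ 0) (ht : ν t ≠ ∞)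
    (hf : MemLp f 2 (μ.restrict s)) (hg : MemLp g 2 (ν.restrict t)) :
    (⨍ x in s, f x ∂μ - ⨍ y in t, g y ∂ν) ^ 2 ≤
      (μ.real s * ν.real t)⁻¹ * ∫ z in s ×ˢ t, (f z.1 - g z.2) ^ 2 ∂μ.prod ν := by
  have : IsFiniteMeasure (μ.restrict s) := isFiniteMeasure_restrict.2 hs
  have : IsFiniteMeasure (ν.restrict t) := isFiniteMeasure_restrict.2 ht
  have : NeZero (μ.restrict s) := ⟨by simpa using hs₀⟩
  have : NeZero (ν.restrict t) := ⟨by simpa using ht₀⟩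
  convert sq_average_sub_average_le hf hg using 1
  rw [average_eq, Measure.prod_restrict, measureReal_restrict_apply_univ,
    measureReal_prod_prod, smul_eq_mul]

end MeasureTheory

theorem stmt_6_general (d : ℕ)
    (X Y A B : Set (EuclideanSpace ℝ (Fin d)))
    (hX0 : 0 < volume X) (hXfin : volume X < ⊤)
    (hY0 : 0 < volume Y) (hYfin : volume Y < ⊤)
    (hAX : A ⊆ X) (hBY : B ⊆ Y) (hA0 : 0 < volume A) (hB0 : 0 < volume B)
    (u : EuclideanSpace ℝ (Fin d) → ℝ) (hu : MemLp u 2 (volume.restrict (X ∪ Y))) :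
    ((⨍ x in X, u x) - ⨍ x in Y, u x) ^ 2 ≤
      3 * (((volume X).toReal * (volume A).toReal)⁻¹ *
            (∫ p in X ×ˢ A, (u p.1 - u p.2) ^ 2) +
          ((volume A).toReal * (volume B).toReal)⁻¹ *
            (∫ p in A ×ˢ B, (u p.1 - u p.2) ^ 2) +
          ((volume B).toReal * (volume Y).toReal)⁻¹ *
            (∫ p in B ×ˢ Y, (u p.1 - u p.2) ^ 2)) := by
  have hAfin : volume A ≠ ⊤ := ((measure_mono hAX).trans_lt hXfin).ne
  have hBfin : volume B ≠ ⊤ := ((measure_mono hBY).trans_lt hYfin).ne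
  have hu_on {S} (hS : S ⊆ X ∪ Y) : MemLp u 2 (volume.restrict S) :=
    hu.mono_measure (Measure.restrict_mono hS le_rfl)
  have huX := hu_on subset_union_left
  have huY := hu_on subset_union_right
  have huA := hu_on (hAX.trans subset_union_left)
  have huB := hu_on (hBY.trans subset_union_right)
  have hXA_sq := sq_setAverage_sub_setAverage_le hX0.ne' hXfin.ne hA0.ne' hAfin huX huA
  have hAB_sq := sq_setAverage_sub_setAverage_le hA0.ne' hAfin hB0.ne' hBfin huA huB
  have hBY_sq := sq_setAverage_sub_setAverage_le hB0.ne' hBfin hY0.ne' hYfin.ne huB huY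
  set a := (⨍ x in X, u x) - ⨍ x in A, u x
  set b := (⨍ x in A, u x) - ⨍ x in B, u x
  set c := (⨍ x in B, u x) - ⨍ x in Y, u x
  have hsplit : (⨍ x in X, u x) - ⨍ x in Y, u x = a + b + c := by ring
  have hsq : (a + b + c) ^ 2 ≤ 3 * (a ^ 2 + b ^ 2 + c ^ 2) := by
    nlinarith [sq_nonneg (a - b), sq_nonneg (b - c), sq_nonneg (a - c)]
  simp only [measureReal_def, ← Measure.volume_eq_prod] at hXA_sq hAB_sq hBY_sq
  rw [hsplit]
  linarith

/-- a three-term estimate for the difference of averages. -/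
theorem stmt_6 (d : ℕ) (hd : 1 ≤ d)
    (X Y A B : Set (EuclideanSpace ℝ (Fin d)))
    (hXm : MeasurableSet X) (hYm : MeasurableSet Y)
    (hX0 : 0 < volume X) (hXfin : volume X < ⊤)
    (hY0 : 0 < volume Y) (hYfin : volume Y < ⊤)
    (hAm : MeasurableSet A) (hBm : MeasurableSet B)
    (hAX : A ⊆ X) (hBY : B ⊆ Y) (hA0 : 0 < volume A) (hB0 : 0 < volume B)
    (u : EuclideanSpace ℝ (Fin d) → ℝ) (hu : MemLp u 2 (volume.restrict (X ∪ Y))) :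
    ((⨍ x in X, u x) - ⨍ x in Y, u x) ^ 2 ≤
      3 * (((volume X).toReal * (volume A).toReal)⁻¹ *
            (∫ p in X ×ˢ A, (u p.1 - u p.2) ^ 2) +
          ((volume A).toReal * (volume B).toReal)⁻¹ *
            (∫ p in A ×ˢ B, (u p.1 - u p.2) ^ 2) +
          ((volume B).toReal * (volume Y).toReal)⁻¹ *
            (∫ p in B ×ˢ Y, (u p.1 - u p.2) ^ 2)) :=
  stmt_6_general d X Y A B hX0 hXfin hY0 hYfin hAX hBY hA0 hB0 u hu
end
end

section
/- Assume K ⊆ B̄_L (the closed ball of radius L centered at 0) and let δ, ε > 0 satisfy ε ≥ 4(1+√d)(L+1)δ. Set c_d = 1/(1+√d), and for k ∈ ℤ^d let Q_ε^k = c_d ε (k + [0,1)^d) and Z_ε = {k ∈ ℤ^d : the closure of Q_ε^k is contained in Ω}. For u ∈ L²(Ω) and k ∈ Z_ε let u^k be the average of u over Q_ε^k ∩ δE. Then F_{δ,ε}(u) ≥ 4^{−d}(1+√d)^{−2d} |K|² Σ_{{k,k' ∈ Z_ε : |k−k'| = 1}} ε^{d−2} (u^k − u^{k'})². -/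
open MeasureTheory Filter Metric Set Pointwise
open scoped Topology ENNReal NNReal

noncomputable section

/-- The half-open unit cube `[0,1)^d`. -/
def cube01 (d : ℕ) : Set (EuclideanSpace ℝ (Fin d)) :=
  {x | ∀ i, 0 ≤ x i ∧ x i < 1}

/-- The cube `Q_ε^k = c_d ε (k + [0,1)^d)` with `c_d = (1+√d)⁻¹`. -/
def Qcube (d : ℕ) (ε : ℝ) (k : Fin d → ℤ) : Set (EuclideanSpace ℝ (Fin d)) :=
  ((1 + Real.sqrt d)⁻¹ * ε) • (lat d k +ᵥ cube01 d)

/-! Each cube `Q_ε^k` has side `s = c_d ε ≥ 4(L+1)δ`, so it contains at least `(s/2δ)^d` whole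
cells `δ(j + K)`, whence `|Q_ε^k ∩ δE| ≥ (s/2)^d |K|`. Two points of neighbouring cubes are at
distance `< s(1 + √d) = ε`, and Jensen's inequality on the product of the two cubes gives
`|A| |B| (u_A - u_B)² ≤ ∫_{A×B} (u(x) - u(y))²`. The products `A × B` over distinct ordered pairs
of neighbours are disjoint subsets of the integration domain of `F_{δ,ε}`, and summing these
bounds gives the estimate. -/

open Function

section Averages

variable {α β : Type*} [MeasurableSpace α] [MeasurableSpace β] {μ : Measure α} {ν : Measure β}
  [IsFiniteMeasure μ] [IsFiniteMeasure ν]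

lemma sq_integral_le_measureReal_mul_integral_sq {h : α → ℝ} (hh : MemLp h 2 μ) :
    (∫ x, h x ∂μ) ^ 2 ≤ μ.real univ * ∫ x, h x ^ 2 ∂μ := by
  obtain rfl | hμ := eq_zero_or_neZero μ
  · simp
  have hjensen := (even_two.convexOn_pow (𝕜 := ℝ)).map_average_le
    (continuous_pow 2).continuousOn isClosed_univ (ae_of_all _ fun _ => mem_univ _)
    (hh.integrable one_le_two) hh.integrable_sq
  have hpos : 0 < μ.real univ := measureReal_univ_pos
  rw [average_eq, average_eq, smul_eq_mul, smul_eq_mul, mul_pow, inv_pow, ← div_eq_inv_mul,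
    div_le_iff₀ (by positivity)] at hjensen
  calc _ ≤ _ := hjensen
    _ = μ.real univ * ∫ x, h x ^ 2 ∂μ := by field_simp

lemma sq_average_sub_average_mul_le_integral_prod {f : α → ℝ} {g : β → ℝ} (hf : MemLp f 2 μ)
    (hg : MemLp g 2 ν) :
    (⨍ x, f x ∂μ - ⨍ y, g y ∂ν) ^ 2 * (μ.real univ * ν.real univ) ≤
      ∫ p, (f p.1 - g p.2) ^ 2 ∂μ.prod ν := by
  set c := μ.real univ * ν.real univ
  have hfg : MemLp (fun p : α × β => f p.1 - g p.2) 2 (μ.prod ν) :=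
    (hf.comp_fst ν).sub (hg.comp_snd μ)
  have hint : ∫ p, (f p.1 - g p.2) ∂μ.prod ν = c * (⨍ x, f x ∂μ - ⨍ y, g y ∂ν) := by
    rw [integral_sub ((hf.integrable one_le_two).comp_fst ν)
        ((hg.integrable one_le_two).comp_snd μ),
      integral_fun_fst, integral_fun_snd, ← measure_smul_average, ← measure_smul_average]
    simp only [smul_eq_mul, c]
    ring
  have hcs := sq_integral_le_measureReal_mul_integral_sq hfg
  rw [hint, ← univ_prod_univ, measureReal_prod_prod] at hcs
  rcases (show 0 ≤ c by positivity).eq_or_lt with hc | hc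
  · rw [← hc, mul_zero]
    exact integral_nonneg fun _ => sq_nonneg _
  · nlinarith

end Averages

section SetIntegrals

variable {α : Type*} [MeasurableSpace α] {μ : Measure α} [SFinite μ] {Ω : Set α} {u : α → ℝ}

lemma integrableOn_sq_sub_prod (hΩ : μ Ω ≠ ⊤) (hu : MemLp u 2 (μ.restrict Ω)) :
    IntegrableOn (fun p : α × α => (u p.1 - u p.2) ^ 2) (Ω ×ˢ Ω) (μ.prod μ) := by
  have := isFiniteMeasure_restrict.2 hΩ
  rw [IntegrableOn, ← Measure.prod_restrict]
  exact ((hu.comp_fst _).sub (hu.comp_snd _)).integrable_sq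

lemma sq_mul_sq_setAverage_sub_le_setIntegral_prod (hΩ : μ Ω ≠ ⊤)
    (hu : MemLp u 2 (μ.restrict Ω)) {A B : Set α} (hA : A ⊆ Ω) (hB : B ⊆ Ω) {m : ℝ} (hm : 0 ≤ m)
    (hmA : m ≤ μ.real A) (hmB : m ≤ μ.real B) :
    m ^ 2 * (⨍ x in A, u x ∂μ - ⨍ x in B, u x ∂μ) ^ 2 ≤
      ∫ p in A ×ˢ B, (u p.1 - u p.2) ^ 2 ∂μ.prod μ := by
  have := isFiniteMeasure_restrict.2 (ne_top_of_le_ne_top hΩ (measure_mono hA))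
  have := isFiniteMeasure_restrict.2 (ne_top_of_le_ne_top hΩ (measure_mono hB))
  have h := sq_average_sub_average_mul_le_integral_prod
    (hu.mono_measure (Measure.restrict_mono hA le_rfl))
    (hu.mono_measure (Measure.restrict_mono hB le_rfl))
  rw [measureReal_restrict_apply_univ, measureReal_restrict_apply_univ,
    Measure.prod_restrict] at h
  refine le_trans ?_ h
  rw [mul_comm, sq m]
  gcongr

end SetIntegrals

lemma tsum_le_setIntegral_of_le_setIntegral {α ι : Type*} [MeasurableSpace α] {μ : Measure α}
    [Countable ι] {a : ι → ℝ} {s : ι → Set α} {t : Set α} {f : α → ℝ}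
    (ha₀ : ∀ i, 0 ≤ a i) (ha : ∀ i, a i ≤ ∫ x in s i, f x ∂μ) (hs : ∀ i, MeasurableSet (s i))
    (hd : Pairwise (Disjoint on s)) (hst : ∀ i, s i ⊆ t) (hf : IntegrableOn f t μ)
    (hf₀ : ∀ x, 0 ≤ f x) :
    ∑' i, a i ≤ ∫ x in t, f x ∂μ := by
  have hsum := hasSum_integral_iUnion hs hd (hf.mono_set (iUnion_subset hst))
  calc ∑' i, a i ≤ ∫ x in ⋃ i, s i, f x ∂μ :=
        hasSum_le ha (Summable.of_nonneg_of_le ha₀ ha hsum.summable).hasSum hsum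
    _ ≤ ∫ x in t, f x ∂μ :=
        setIntegral_mono_set hf (ae_of_all _ hf₀) (iUnion_subset hst).eventuallyLE

lemma IsAdmissibleK.isClosed {d : ℕ} {K : Set (EuclideanSpace ℝ (Fin d))}
    (hK : IsAdmissibleK d K) : IsClosed K := by
  obtain ⟨⟨U, -, -, -, rfl⟩, -, -⟩ := hK
  exact isClosed_closure

lemma IsAdmissibleK.nonempty {d : ℕ} {K : Set (EuclideanSpace ℝ (Fin d))}
    (hK : IsAdmissibleK d K) : K.Nonempty := by
  obtain ⟨⟨U, -, hU, -, rfl⟩, -, -⟩ := hK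
  exact hU.nonempty.closure

lemma lat_add (d : ℕ) (j j' : Fin d → ℤ) : lat d (j + j') = lat d j + lat d j' := by
  ext i; simp [lat]

lemma disjoint_lat_vadd {d : ℕ} {K : Set (EuclideanSpace ℝ (Fin d))}
    (hK : ∀ k : Fin d → ℤ, k ≠ 0 → Disjoint (lat d k +ᵥ K) K) {j j' : Fin d → ℤ} (h : j ≠ j') :
    Disjoint (lat d j +ᵥ K) (lat d j' +ᵥ K) := by
  have := hK (j - j') (sub_ne_zero.2 h)
  rwa [← disjoint_vadd_set (a := lat d j'), vadd_vadd, ← lat_add, add_sub_cancel] at this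

lemma measurableSet_latSet {d : ℕ} {K : Set (EuclideanSpace ℝ (Fin d))} (hK : MeasurableSet K) :
    MeasurableSet (latSet d K) :=
  .iUnion fun _ => hK.const_vadd _

lemma volume_smul_lat_vadd {d : ℕ} {δ : ℝ} (hδ : 0 ≤ δ) (j : Fin d → ℤ)
    (K : Set (EuclideanSpace ℝ (Fin d))) :
    volume (δ • (lat d j +ᵥ K)) = ENNReal.ofReal (δ ^ d) * volume K := by
  rw [Measure.addHaar_smul_of_nonneg volume hδ, measure_vadd, finrank_euclideanSpace_fin]

lemma card_mul_le_volume_inter_smul_latSet {d : ℕ} {K S : Set (EuclideanSpace ℝ (Fin d))}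
    (hKm : MeasurableSet K) (hK : ∀ k : Fin d → ℤ, k ≠ 0 → Disjoint (lat d k +ᵥ K) K)
    {δ : ℝ} (hδ : 0 < δ) (J : Finset (Fin d → ℤ)) (hJ : ∀ j ∈ J, δ • (lat d j +ᵥ K) ⊆ S) :
    J.card * (ENNReal.ofReal (δ ^ d) * volume K) ≤ volume (S ∩ δ • latSet d K) := by
  have hdisj : (J : Set (Fin d → ℤ)).PairwiseDisjoint fun j => δ • (lat d j +ᵥ K) :=
    fun j _ j' _ h =>
      (disjoint_image_iff (smul_right_injective _ hδ.ne')).2 (disjoint_lat_vadd hK h)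
  have hsub : ⋃ j ∈ J, δ • (lat d j +ᵥ K) ⊆ S ∩ δ • latSet d K :=
    iUnion₂_subset fun j hj => subset_inter (hJ j hj)
      (smul_set_mono (subset_iUnion (fun j => lat d j +ᵥ K) j))
  calc J.card * (ENNReal.ofReal (δ ^ d) * volume K)
      = ∑ j ∈ J, volume (δ • (lat d j +ᵥ K)) := by
        simp [volume_smul_lat_vadd hδ.le]
    _ = volume (⋃ j ∈ J, δ • (lat d j +ᵥ K)) :=
        (measure_biUnion_finset hdisj fun j _ => (hKm.const_vadd _).const_smul₀ δ).symm
    _ ≤ _ := measure_mono hsub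

lemma measurableSet_cube01 (d : ℕ) : MeasurableSet (cube01 d) := by
  simp only [cube01, ofPred_forall]
  exact .iInter fun i =>
    (show Measurable fun x : EuclideanSpace ℝ (Fin d) => x i by fun_prop) measurableSet_Ico

lemma norm_sub_lt_sqrt_of_mem_cube01 {d : ℕ} (hd : 0 < d) {a b : EuclideanSpace ℝ (Fin d)}
    (ha : a ∈ cube01 d) (hb : b ∈ cube01 d) : ‖a - b‖ < Real.sqrt d := by
  have : Nonempty (Fin d) := ⟨⟨0, hd⟩⟩
  rw [EuclideanSpace.norm_eq]
  refine Real.sqrt_lt_sqrt (by positivity) ?_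
  calc ∑ i, ‖(a - b) i‖ ^ 2 < ∑ _i : Fin d, (1 : ℝ) :=
        Finset.sum_lt_sum_of_nonempty Finset.univ_nonempty fun i _ => by
          obtain ⟨ha₀, ha₁⟩ := ha i
          obtain ⟨hb₀, hb₁⟩ := hb i
          rw [PiLp.sub_apply, Real.norm_eq_abs, sq_abs]
          nlinarith
    _ = d := by simp

lemma mem_smul_lat_vadd_cube01 {d : ℕ} {s : ℝ} (hs : 0 < s) (k : Fin d → ℤ)
    (x : EuclideanSpace ℝ (Fin d)) :
    x ∈ s • (lat d k +ᵥ cube01 d) ↔ ∀ i, ⌊x i / s⌋ = k i := by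
  rw [mem_smul_set_iff_inv_smul_mem₀ hs.ne', mem_vadd_set_iff_neg_vadd_mem]
  refine forall_congr' fun i => ?_
  simp only [Int.floor_eq_iff, lat, vadd_eq_add, PiLp.add_apply, PiLp.neg_apply,
    PiLp.smul_apply, smul_eq_mul]
  constructor <;> rintro ⟨h₁, h₂⟩ <;> constructor <;> rw [inv_mul_eq_div] at * <;> linarith

lemma pairwise_disjoint_smul_lat_vadd_cube01 (d : ℕ) {s : ℝ} (hs : 0 < s) :
    Pairwise (Disjoint on fun k => s • (lat d k +ᵥ cube01 d)) := by
  intro k k' hkk'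
  refine disjoint_left.2 fun x hx hx' => hkk' (funext fun i => ?_)
  rw [mem_smul_lat_vadd_cube01 hs] at hx hx'
  rw [← hx i, hx' i]

lemma dist_lt_of_mem_smul_lat_vadd_cube01 {d : ℕ} {s : ℝ} (hs : 0 < s) {k k' : Fin d → ℤ}
    (hkk' : dist (lat d k) (lat d k') = 1) {x y : EuclideanSpace ℝ (Fin d)}
    (hx : x ∈ s • (lat d k +ᵥ cube01 d)) (hy : y ∈ s • (lat d k' +ᵥ cube01 d)) :
    dist x y < s * (1 + Real.sqrt d) := by
  have hd : 0 < d := by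
    refine Nat.pos_of_ne_zero fun hd => ?_
    subst hd
    simp [Subsingleton.elim (lat 0 k) (lat 0 k')] at hkk'
  obtain ⟨_, ⟨a, ha, rfl⟩, rfl⟩ := hx
  obtain ⟨_, ⟨b, hb, rfl⟩, rfl⟩ := hy
  rw [dist_eq_norm, ← smul_sub, norm_smul, Real.norm_of_nonneg hs.le]
  refine mul_lt_mul_of_pos_left ?_ hs
  calc ‖lat d k + a - (lat d k' + b)‖ = ‖(lat d k - lat d k') + (a - b)‖ := by
        congr 1; abel
    _ ≤ ‖lat d k - lat d k'‖ + ‖a - b‖ := norm_add_le _ _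
    _ < 1 + Real.sqrt d := by
        rw [← dist_eq_norm, hkk']
        exact add_lt_add_right (norm_sub_lt_sqrt_of_mem_cube01 hd ha hb) 1

lemma smul_lat_vadd_subset_smul_lat_vadd_cube01 {d : ℕ} {K : Set (EuclideanSpace ℝ (Fin d))}
    {L δ s : ℝ} (hKL : K ⊆ closedBall 0 L) (hδ : 0 < δ) (hs : 0 < s) {j k : Fin d → ℤ}
    (hjk : ∀ i, s * k i / δ + L ≤ j i ∧ (j i : ℝ) < s * (k i + 1) / δ - L) :
    δ • (lat d j +ᵥ K) ⊆ s • (lat d k +ᵥ cube01 d) := by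
  rintro _ ⟨_, ⟨w, hw, rfl⟩, rfl⟩
  rw [mem_smul_lat_vadd_cube01 hs]
  intro i
  have hwi : |w i| ≤ L := (PiLp.norm_apply_le w i).trans (mem_closedBall_zero_iff.1 (hKL hw))
  obtain ⟨hlo, hhi⟩ := hjk i
  have hlo' : s * k i ≤ (j i - L) * δ := (div_le_iff₀ hδ).1 (by linarith)
  have hhi' : (j i + L) * δ < s * (k i + 1) := (lt_div_iff₀ hδ).1 (by linarith)
  have hx : (δ • (lat d j +ᵥ w)) i = δ * (j i + w i) := by simp [lat, mul_add]
  rw [abs_le] at hwi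
  rw [hx, Int.floor_eq_iff, le_div_iff₀ hs, div_lt_iff₀ hs]
  constructor <;> nlinarith

lemma card_Ico_ceil_ge (a b : ℝ) : b - a - 1 ≤ ((Finset.Ico ⌈a⌉ ⌈b⌉).card : ℝ) := by
  rw [Int.card_Ico]
  calc b - a - 1 ≤ ((⌈b⌉ - ⌈a⌉ : ℤ) : ℝ) := by
        push_cast; linarith [Int.le_ceil b, Int.ceil_lt_add_one a]
    _ ≤ _ := by exact_mod_cast Int.self_le_toNat _

lemma ofReal_mul_volume_le_volume_cube_inter_smul_latSet {d : ℕ}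
    {K : Set (EuclideanSpace ℝ (Fin d))} (hKm : MeasurableSet K)
    (hK : ∀ k : Fin d → ℤ, k ≠ 0 → Disjoint (lat d k +ᵥ K) K) {L δ s : ℝ}
    (hKL : K ⊆ closedBall 0 L) (hδ : 0 < δ) (hs : 0 < s) (hsδ : 4 * (L + 1) * δ ≤ s)
    (k : Fin d → ℤ) :
    ENNReal.ofReal ((s / 2) ^ d) * volume K ≤
      volume (s • (lat d k +ᵥ cube01 d) ∩ δ • latSet d K) := by
  set I := fun i => Finset.Ico ⌈s * k i / δ + L⌉ ⌈s * (k i + 1) / δ - L⌉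
  have hJ : ∀ j ∈ Fintype.piFinset I, δ • (lat d j +ᵥ K) ⊆ s • (lat d k +ᵥ cube01 d) :=
    fun j hj => smul_lat_vadd_subset_smul_lat_vadd_cube01 hKL hδ hs fun i => by
      simpa only [I, Finset.mem_Ico, Int.ceil_le, Int.lt_ceil] using Fintype.mem_piFinset.1 hj i
  have hI : ∀ i, s / (2 * δ) ≤ (I i).card := fun i => by
    refine le_trans ?_ (card_Ico_ceil_ge _ _)
    have hgap : s * (k i + 1) / δ - L - (s * k i / δ + L) - 1 = s / δ - 2 * L - 1 := by
      field_simp; ring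
    have hsδ' : 4 * (L + 1) ≤ s / δ := (le_div_iff₀ hδ).2 hsδ
    rw [hgap, show s / (2 * δ) = s / δ / 2 by ring]
    linarith
  have hcard : (s / 2) ^ d ≤ (Fintype.piFinset I).card * δ ^ d :=
    calc (s / 2) ^ d = (∏ _i : Fin d, s / (2 * δ)) * δ ^ d := by
          rw [Finset.prod_const, Finset.card_univ, Fintype.card_fin, ← mul_pow]; field_simp
      _ ≤ (Fintype.piFinset I).card * δ ^ d := by
          rw [Fintype.card_piFinset, Nat.cast_prod]
          gcongr with i
          exact hI i
  calc ENNReal.ofReal ((s / 2) ^ d) * volume K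
      ≤ (Fintype.piFinset I).card * (ENNReal.ofReal (δ ^ d) * volume K) := by
        rw [← mul_assoc, ← ENNReal.ofReal_natCast, ← ENNReal.ofReal_mul (by positivity)]
        gcongr
    _ ≤ _ := card_mul_le_volume_inter_smul_latSet hKm hK hδ _ hJ

lemma measurableSet_Qcube (d : ℕ) (ε : ℝ) (k : Fin d → ℤ) : MeasurableSet (Qcube d ε k) :=
  ((measurableSet_cube01 d).const_vadd _).const_smul₀ _

lemma disjoint_Qcube {d : ℕ} {ε : ℝ} (hε : 0 < ε) {k k' : Fin d → ℤ} (h : k ≠ k') :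
    Disjoint (Qcube d ε k) (Qcube d ε k') :=
  pairwise_disjoint_smul_lat_vadd_cube01 d (by positivity) h

lemma dist_lt_of_mem_Qcube {d : ℕ} {ε : ℝ} (hε : 0 < ε) {k k' : Fin d → ℤ}
    (hkk' : dist (lat d k) (lat d k') = 1) {x y : EuclideanSpace ℝ (Fin d)}
    (hx : x ∈ Qcube d ε k) (hy : y ∈ Qcube d ε k') : dist x y < ε := by
  have h := dist_lt_of_mem_smul_lat_vadd_cube01 (by positivity) hkk' hx hy
  rwa [inv_mul_eq_div, div_mul_cancel₀ _ (by positivity)] at h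

lemma mul_sq_setAverage_Qcube_sub_le {d : ℕ} {K Ω : Set (EuclideanSpace ℝ (Fin d))}
    (hK : IsAdmissibleK d K) {L δ ε : ℝ} (hKL : K ⊆ closedBall 0 L) (hδ : 0 < δ)
    (hε : 4 * (1 + Real.sqrt d) * (L + 1) * δ ≤ ε) (hΩ : volume Ω ≠ ⊤)
    {u : EuclideanSpace ℝ (Fin d) → ℝ} (hu : MemLp u 2 (volume.restrict Ω)) {k k' : Fin d → ℤ}
    (hk : Qcube d ε k ∩ δ • latSet d K ⊆ Ω) (hk' : Qcube d ε k' ∩ δ • latSet d K ⊆ Ω) :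
    (4:ℝ) ^ (-(d:ℤ)) * (1 + Real.sqrt d) ^ (-(2 * d : ℤ)) * ((volume K).toReal) ^ 2 *
        (ε ^ ((d:ℤ) - 2) * ((⨍ x in Qcube d ε k ∩ δ • latSet d K, u x) -
          ⨍ x in Qcube d ε k' ∩ δ • latSet d K, u x) ^ 2) ≤
      (ε ^ (d + 2))⁻¹ * ∫ p in (Qcube d ε k ∩ δ • latSet d K) ×ˢ (Qcube d ε k' ∩ δ • latSet d K),
        (u p.1 - u p.2) ^ 2 := by
  have hL : 0 ≤ L := nonempty_closedBall.1 (hK.nonempty.mono hKL)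
  have hε₀ : 0 < ε := lt_of_lt_of_le (by positivity) hε
  set s := (1 + Real.sqrt d)⁻¹ * ε with hs
  have hsδ : 4 * (L + 1) * δ ≤ s := by rw [hs, le_inv_mul_iff₀ (by positivity)]; linarith
  set m := (s / 2) ^ d * (volume K).toReal
  have hm : ∀ k, Qcube d ε k ∩ δ • latSet d K ⊆ Ω →
      m ≤ volume.real (Qcube d ε k ∩ δ • latSet d K) := fun j hj => by
    have h := ofReal_mul_volume_le_volume_cube_inter_smul_latSet hK.isClosed.measurableSet
      hK.2.2 hKL hδ (by positivity) hsδ j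
    have := ENNReal.toReal_mono (ne_top_of_le_ne_top hΩ (measure_mono hj)) h
    rwa [ENNReal.toReal_mul, ENNReal.toReal_ofReal (by positivity)] at this
  have hconst : (4:ℝ) ^ (-(d:ℤ)) * (1 + Real.sqrt d) ^ (-(2 * d : ℤ)) * (volume K).toReal ^ 2 *
      ε ^ ((d:ℤ) - 2) = (ε ^ (d + 2))⁻¹ * m ^ 2 := by
    rw [show (-(2 * d : ℤ)) = -((2 * d : ℕ) : ℤ) by push_cast; ring, zpow_neg, zpow_neg,
      zpow_sub₀ hε₀.ne', zpow_natCast, zpow_natCast, zpow_natCast, show (4:ℝ) = 2 ^ 2 by norm_num]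
    simp only [m, hs, div_pow, mul_pow, inv_pow, ← pow_mul]
    field_simp
    ring
  rw [← mul_assoc, hconst, mul_assoc]
  exact mul_le_mul_of_nonneg_left (sq_mul_sq_setAverage_sub_le_setIntegral_prod hΩ hu hk hk'
    (by positivity) (hm k hk) (hm k' hk')) (by positivity)

theorem stmt_7_general (d : ℕ)
    (K : Set (EuclideanSpace ℝ (Fin d))) (hK : IsAdmissibleK d K)
    (Ω : Set (EuclideanSpace ℝ (Fin d))) (hΩb : Bornology.IsBounded Ω)
    (L : ℝ) (hKL : K ⊆ Metric.closedBall 0 L)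
    (δ ε : ℝ) (hδ : 0 < δ) (hε : 4 * (1 + Real.sqrt d) * (L + 1) * δ ≤ ε)
    (u : EuclideanSpace ℝ (Fin d) → ℝ) (hu : MemLp u 2 (volume.restrict Ω)) :
    (4:ℝ) ^ (-(d:ℤ)) * (1 + Real.sqrt d) ^ (-(2 * d : ℤ)) * ((volume K).toReal) ^ 2 *
      ∑' p : {p : (Fin d → ℤ) × (Fin d → ℤ) //
          closure (Qcube d ε p.1) ⊆ Ω ∧ closure (Qcube d ε p.2) ⊆ Ω ∧
          dist (lat d p.1) (lat d p.2) = 1},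
        ε ^ ((d:ℤ) - 2) *
          ((⨍ x in Qcube d ε p.1.1 ∩ δ • latSet d K, u x) -
            ⨍ x in Qcube d ε p.1.2 ∩ δ • latSet d K, u x) ^ 2
      ≤ Fball d Ω K δ ε u := by
  have hL : 0 ≤ L := nonempty_closedBall.1 (hK.nonempty.mono hKL)
  have hε₀ : 0 < ε := lt_of_lt_of_le (by positivity) hε
  set E := δ • latSet d K
  have hE : MeasurableSet E := (measurableSet_latSet hK.isClosed.measurableSet).const_smul₀ δ
  have hΩ : ∀ k, closure (Qcube d ε k) ⊆ Ω → Qcube d ε k ∩ E ⊆ Ω := fun k hk =>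
    inter_subset_left.trans (subset_closure.trans hk)
  rw [Fball, ← integral_const_mul, ← tsum_mul_left]
  refine tsum_le_setIntegral_of_le_setIntegral
    (s := fun p => (Qcube d ε p.1.1 ∩ E) ×ˢ (Qcube d ε p.1.2 ∩ E)) (fun p => by positivity)
    (fun ⟨(k, k'), hk, hk', _⟩ => ?_)
    (fun p => ((measurableSet_Qcube ..).inter hE).prod ((measurableSet_Qcube ..).inter hE))
    (fun p q hpq => ?_) (fun ⟨(k, k'), hk, hk', hkk'⟩ => ?_)
    (((integrableOn_sq_sub_prod hΩb.measure_lt_top.ne hu).mono_set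
      fun _ hp => ⟨hp.1.1.1, hp.1.2.1⟩).const_mul _) (fun _ => by positivity)
  · rw [integral_const_mul]
    exact mul_sq_setAverage_Qcube_sub_le hK hKL hδ hε hΩb.measure_lt_top.ne hu
      (hΩ k hk) (hΩ k' hk')
  · have hne : p.1.1 ≠ q.1.1 ∨ p.1.2 ≠ q.1.2 := by
      contrapose! hpq
      exact Subtype.ext (Prod.ext hpq.1 hpq.2)
    exact disjoint_prod.2 <| hne.imp
      (fun h => (disjoint_Qcube hε₀ h).mono inter_subset_left inter_subset_left)
      (fun h => (disjoint_Qcube hε₀ h).mono inter_subset_left inter_subset_left)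
  · rintro ⟨x, y⟩ ⟨hx, hy⟩
    exact ⟨⟨⟨hΩ k hk hx, hx.2⟩, ⟨hΩ k' hk' hy, hy.2⟩⟩, dist_lt_of_mem_Qcube hε₀ hkk' hx.1 hy.1⟩

/-- coarse-grained coerciveness estimate in the regime `ε >> δ`. -/
theorem stmt_7 (d : ℕ) (hd : 1 ≤ d)
    (K : Set (EuclideanSpace ℝ (Fin d))) (hK : IsAdmissibleK d K)
    (Ω : Set (EuclideanSpace ℝ (Fin d))) (hΩo : IsOpen Ω) (hΩb : Bornology.IsBounded Ω)
    (L : ℝ) (hKL : K ⊆ Metric.closedBall 0 L)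
    (δ ε : ℝ) (hδ : 0 < δ) (hε : 4 * (1 + Real.sqrt d) * (L + 1) * δ ≤ ε)
    (u : EuclideanSpace ℝ (Fin d) → ℝ) (hu : MemLp u 2 (volume.restrict Ω)) :
    (4:ℝ) ^ (-(d:ℤ)) * (1 + Real.sqrt d) ^ (-(2 * d : ℤ)) * ((volume K).toReal) ^ 2 *
      ∑' p : {p : (Fin d → ℤ) × (Fin d → ℤ) //
          closure (Qcube d ε p.1) ⊆ Ω ∧ closure (Qcube d ε p.2) ⊆ Ω ∧
          dist (lat d p.1) (lat d p.2) = 1},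
        ε ^ ((d:ℤ) - 2) *
          ((⨍ x in Qcube d ε p.1.1 ∩ δ • latSet d K, u x) -
            ⨍ x in Qcube d ε p.1.2 ∩ δ • latSet d K, u x) ^ 2
      ≤ Fball d Ω K δ ε u :=
  stmt_7_general d K hK Ω hΩb L hKL δ ε hδ hε u hu
end
end
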